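/- arXiv:1211.2942 — 13 statements merged into one kernel-verified Lean document; each statement's English description precedes it below -/
import Mathlib

section
/- Let n be a positive integer and let h : F_2^n → F_2^n be any function. Then the set D_h = {Ψ(d) + 2Ψ(h(d)) : d ∈ F_2^n} ⊆ (Z/4)^n is a (2^n,2^n,2^n,1)-relative difference set in (Z/4)^n relative to the subgroup N = 2(Z/4)^n if and only if for every a ∈ F_2^n with a ≠ 0 the map Δ_{h,a} : F_2^n → F_2^n, Δ_{h,a}(d) = h(d+a) + h(d) + d ⊙ a, is a bijection of F_2^n. -/
open Function

/-- The embedding ψ : F₂ → ℤ/4 with ψ(0)=0, ψ(1)=1. -/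
def psi : ZMod 2 → ZMod 4 := fun x => (x.val : ZMod 4)

/-- The coordinatewise extension Ψ : F₂ⁿ → (ℤ/4)ⁿ of ψ. -/
def Psi {n : ℕ} (x : Fin n → ZMod 2) : Fin n → ZMod 4 := fun i => psi (x i)

/-- Coordinatewise product on F₂ⁿ. -/
def odot {n : ℕ} (x y : Fin n → ZMod 2) : Fin n → ZMod 2 := fun i => x i * y i

/-- `D` is a (2ⁿ,2ⁿ,2ⁿ,1)-relative difference set in (ℤ/4)ⁿ relative to the
subgroup N = 2(ℤ/4)ⁿ (the elements of order at most 2): `D` has 2ⁿ elements,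
every element outside N is a difference of elements of `D` in exactly one way,
and no nonzero element of N is a difference of two distinct elements of `D`. -/
def IsRDS (n : ℕ) (D : Set (Fin n → ZMod 4)) : Prop :=
  D.ncard = 2 ^ n ∧
  (∀ g : Fin n → ZMod 4, g + g ≠ 0 →
    ∃! p : (Fin n → ZMod 4) × (Fin n → ZMod 4),
      p.1 ∈ D ∧ p.2 ∈ D ∧ p.1 - p.2 = g) ∧
  (∀ g : Fin n → ZMod 4, g + g = 0 → g ≠ 0 →
    ¬ ∃ d₁ ∈ D, ∃ d₂ ∈ D, d₁ ≠ d₂ ∧ d₁ - d₂ = g)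

/-!
Write every element of `(ℤ/4)ⁿ` uniquely as `Ψ(a) + 2Ψ(b)` with `a, b ∈ F₂ⁿ`. A direct computation
in `ℤ/4` shows that the elements of `D_h` satisfy
`(Ψ(d + a) + 2Ψ(h(d + a))) - (Ψ(d) + 2Ψ(h(d))) = Ψ(a) + 2Ψ(Δ_{h,a}(d))`.
Hence the ways of writing `Ψ(a) + 2Ψ(b)` as a difference of two elements of `D_h` correspond exactly to
the solutions `d` of `Δ_{h,a}(d) = b`. An element lies in `N` exactly when `a = 0`, so differences of
distinct elements of `D_h` never lie in `N`, and unique representability outside `N` says precisely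
that every `Δ_{h,a}` with `a ≠ 0` is bijective.
-/

variable {n : ℕ}

lemma psi_add_sub (v a s t : ZMod 2) :
    (psi (v + a) + 2 * psi s) - (psi v + 2 * psi t) = psi a + 2 * psi (s + t + v * a) := by
  revert v a s t; decide

lemma psi_add_two_mul_psi_inj {a b a' b' : ZMod 2} (h : psi a + 2 * psi b = psi a' + 2 * psi b') :
    a = a' ∧ b = b' := by
  revert a b a' b' h; decide

lemma exists_eq_psi_add_two_mul_psi (x : ZMod 4) : ∃ a b, x = psi a + 2 * psi b := by
  revert x; decide

lemma psi_add_two_mul_psi_add_self_eq_zero_iff (a b : ZMod 2) :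
    (psi a + 2 * psi b) + (psi a + 2 * psi b) = 0 ↔ a = 0 := by
  revert a b; decide

lemma Psi_add_two_mul_Psi_inj {a b a' b' : Fin n → ZMod 2}
    (h : Psi a + 2 * Psi b = Psi a' + 2 * Psi b') : a = a' ∧ b = b' :=
  ⟨funext fun i => (psi_add_two_mul_psi_inj (congrFun h i)).1,
    funext fun i => (psi_add_two_mul_psi_inj (congrFun h i)).2⟩

lemma exists_eq_Psi_add_two_mul_Psi (g : Fin n → ZMod 4) :
    ∃ a b : Fin n → ZMod 2, g = Psi a + 2 * Psi b := by
  choose a b hab using fun i => exists_eq_psi_add_two_mul_psi (g i)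
  exact ⟨a, b, funext hab⟩

lemma Psi_add_two_mul_Psi_add_self_eq_zero_iff (a b : Fin n → ZMod 2) :
    (Psi a + 2 * Psi b) + (Psi a + 2 * Psi b) = 0 ↔ a = 0 := by
  simp only [funext_iff]
  exact forall_congr' fun i => psi_add_two_mul_psi_add_self_eq_zero_iff (a i) (b i)

/-- Its range is `D_h`. -/
def graphLift (h : (Fin n → ZMod 2) → (Fin n → ZMod 2)) (d : Fin n → ZMod 2) : Fin n → ZMod 4 :=
  Psi d + 2 * Psi (h d)

/-- `twistedDerivative h a` is `Δ_{h,a}`. -/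
def twistedDerivative (h : (Fin n → ZMod 2) → (Fin n → ZMod 2)) (a d : Fin n → ZMod 2) :
    Fin n → ZMod 2 :=
  h (d + a) + h d + odot d a

variable (h : (Fin n → ZMod 2) → (Fin n → ZMod 2))

lemma graphLift_injective : Injective (graphLift h) :=
  fun _ _ hd => (Psi_add_two_mul_Psi_inj hd).1

lemma graphLift_add_sub_graphLift (a d : Fin n → ZMod 2) :
    graphLift h (d + a) - graphLift h d = Psi a + 2 * Psi (twistedDerivative h a d) :=
  funext fun i => psi_add_sub (d i) (a i) (h (d + a) i) (h d i)

lemma graphLift_sub_graphLift_eq_iff (d₁ d₂ a b : Fin n → ZMod 2) :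
    graphLift h d₁ - graphLift h d₂ = Psi a + 2 * Psi b ↔
      d₁ = d₂ + a ∧ twistedDerivative h a d₂ = b := by
  obtain ⟨c, rfl⟩ : ∃ c, d₁ = d₂ + c := ⟨d₁ - d₂, (add_sub_cancel d₂ d₁).symm⟩
  rw [graphLift_add_sub_graphLift, add_right_inj]
  constructor
  · intro hc
    obtain ⟨rfl, rfl⟩ := Psi_add_two_mul_Psi_inj hc
    exact ⟨rfl, rfl⟩
  · rintro ⟨rfl, rfl⟩
    rfl

lemma existsUnique_graphLift_sub_iff (a b : Fin n → ZMod 2) :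
    (∃! p : (Fin n → ZMod 4) × (Fin n → ZMod 4), p.1 ∈ Set.range (graphLift h) ∧
        p.2 ∈ Set.range (graphLift h) ∧ p.1 - p.2 = Psi a + 2 * Psi b) ↔
      ∃! d, twistedDerivative h a d = b := by
  constructor
  · rintro ⟨⟨_, _⟩, ⟨⟨d₁, rfl⟩, ⟨d, rfl⟩, hd⟩, huniq⟩
    refine ⟨d, ((graphLift_sub_graphLift_eq_iff h _ _ a b).1 hd).2, fun d' hd' => ?_⟩
    have hpair := huniq (graphLift h (d' + a), graphLift h d')
      ⟨⟨_, rfl⟩, ⟨_, rfl⟩, (graphLift_sub_graphLift_eq_iff h _ _ a b).2 ⟨rfl, hd'⟩⟩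
    exact graphLift_injective h (congrArg Prod.snd hpair)
  · rintro ⟨d, hd, huniq⟩
    refine ⟨(graphLift h (d + a), graphLift h d),
      ⟨⟨_, rfl⟩, ⟨_, rfl⟩, (graphLift_sub_graphLift_eq_iff h _ _ a b).2 ⟨rfl, hd⟩⟩, ?_⟩
    rintro ⟨_, _⟩ ⟨⟨d₁, rfl⟩, ⟨d₂, rfl⟩, hdiff⟩
    obtain ⟨rfl, hd₂⟩ := (graphLift_sub_graphLift_eq_iff h _ _ a b).1 hdiff
    rw [huniq d₂ hd₂]

lemma ncard_range_graphLift : (Set.range (graphLift h)).ncard = 2 ^ n := by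
  rw [Set.ncard_range_of_injective (graphLift_injective h)]
  simp

lemma graphLift_sub_ne_of_add_self_eq_zero {g : Fin n → ZMod 4} (hg : g + g = 0) (hg0 : g ≠ 0) :
    ¬ ∃ ξ₁ ∈ Set.range (graphLift h), ∃ ξ₂ ∈ Set.range (graphLift h), ξ₁ ≠ ξ₂ ∧ ξ₁ - ξ₂ = g := by
  rintro ⟨_, ⟨d₁, rfl⟩, _, ⟨d₂, rfl⟩, hne, rfl⟩
  obtain ⟨a, b, hab⟩ := exists_eq_Psi_add_two_mul_Psi (graphLift h d₁ - graphLift h d₂)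
  obtain ⟨rfl, -⟩ := (graphLift_sub_graphLift_eq_iff h _ _ a b).1 hab
  rw [hab, Psi_add_two_mul_Psi_add_self_eq_zero_iff] at hg
  exact hne (by rw [hg, add_zero])

lemma isRDS_range_graphLift_iff :
    IsRDS n (Set.range (graphLift h)) ↔
      ∀ a : Fin n → ZMod 2, a ≠ 0 → Bijective (twistedDerivative h a) := by
  rw [IsRDS, and_iff_right (ncard_range_graphLift h),
    and_iff_left fun g => graphLift_sub_ne_of_add_self_eq_zero h]
  simp only [bijective_iff_existsUnique, ← existsUnique_graphLift_sub_iff]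
  constructor
  · intro hrds a ha b
    exact hrds _ (mt (Psi_add_two_mul_Psi_add_self_eq_zero_iff a b).1 ha)
  · intro hbij g hg
    obtain ⟨a, b, rfl⟩ := exists_eq_Psi_add_two_mul_Psi g
    exact hbij a (mt (Psi_add_two_mul_Psi_add_self_eq_zero_iff a b).2 hg) b

theorem stmt0_general (n : ℕ) (h : (Fin n → ZMod 2) → (Fin n → ZMod 2)) :
    IsRDS n {ξ | ∃ d : Fin n → ZMod 2, ξ = Psi d + 2 * Psi (h d)} ↔
    ∀ a : Fin n → ZMod 2, a ≠ 0 →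
      Bijective (fun d : Fin n → ZMod 2 => h (d + a) + h d + odot d a) := by
  have hD : {ξ | ∃ d : Fin n → ZMod 2, ξ = Psi d + 2 * Psi (h d)} = Set.range (graphLift h) := by
    ext ξ
    exact exists_congr fun d => eq_comm
  rw [hD]
  exact isRDS_range_graphLift_iff h

/-- `D_h` is a (2ⁿ,2ⁿ,2ⁿ,1)-RDS in (ℤ/4)ⁿ relative to 2(ℤ/4)ⁿ iff
for every nonzero `a` the map `d ↦ h(d+a) + h(d) + d ⊙ a` is a bijection. -/
theorem stmt0 (n : ℕ) (hn : 0 < n) (h : (Fin n → ZMod 2) → (Fin n → ZMod 2)) :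
    IsRDS n {ξ | ∃ d : Fin n → ZMod 2, ξ = Psi d + 2 * Psi (h d)} ↔
    ∀ a : Fin n → ZMod 2, a ≠ 0 →
      Bijective (fun d : Fin n → ZMod 2 => h (d + a) + h d + odot d a) :=
  stmt0_general n h
end

section
/- Let B = (ξ_0,…,ξ_{n−1}) be a basis of F_{2^n} over F_2; for x ∈ F_{2^n} write x = Σ_i x_i ξ_i with coordinates x_i ∈ {0,1} regarded as elements of F_{2^n}. Define x ⊙_B y := Σ_i x_i y_i ξ_i and μ_B(x) := Σ_{i<j} x_i x_j ξ_i ξ_j. Let h : F_{2^n} → F_{2^n} be any function and set f_B(x) := h(x)² + μ_B(x). Then (i) for all a, x ∈ F_{2^n}, f_B(x+a) + f_B(x) + f_B(a) + xa = (h(x+a) + h(x) + h(a) + x ⊙_B a)²; and consequently (ii) the map x ↦ h(x+a) + h(x) + x ⊙_B a is a bijection of F_{2^n} for every a ≠ 0 if and only if f_B is planar. -/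
/-!
Write `x = Σ xᵢξᵢ`, `a = Σ aᵢξᵢ`. The polar form `μ_B(x+a) + μ_B(x) + μ_B(a)` collects the
off-diagonal terms `xᵢaⱼξᵢξⱼ` (`i ≠ j`) of the product `xa`, so in characteristic 2 adding `xa`
leaves the diagonal `Σ xᵢaᵢξᵢ²`, which is `(x ⊙_B a)²` because `xᵢaᵢ ∈ 𝔽₂` and squaring is
additive. Hence `f_B(x+a) + f_B(x) + ax = (h(x+a) + h(x) + x ⊙_B a + h(a))² + f_B(a)`, and
since `y ↦ (y + c)² + d` is a bijection of a perfect field, the two bijectivity conditions agree.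
-/

open Function

/-- `f` is a planar function on a field of characteristic 2:
for every `a ≠ 0` the map `x ↦ f(x+a) + f(x) + ax` is a bijection. -/
def IsPlanar {F : Type*} [Field F] (f : F → F) : Prop :=
  ∀ a : F, a ≠ 0 → Bijective (fun x => f (x + a) + f x + a * x)

open Finset

theorem Finset.sum_prod_univ_eq_sum_diag_add_sum_lt {ι M : Type*} [Fintype ι] [LinearOrder ι]
    [AddCommMonoid M] (f : ι × ι → M) :
    ∑ p, f p = ∑ i, f (i, i) + ∑ p : ι × ι with p.1 < p.2, (f p + f p.swap) := by
  have hsplit : ∀ p : ι × ι, f p = (if p.1 = p.2 then f p else 0)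
      + ((if p.1 < p.2 then f p else 0) + if p.2 < p.1 then f p else 0) := by
    rintro ⟨i, j⟩
    rcases lt_trichotomy i j with hij | rfl | hij
    · simp [hij, hij.ne, hij.not_gt]
    · simp
    · simp [hij, hij.ne', hij.not_gt]
  have hdiag : ∑ p : ι × ι with p.1 = p.2, f p = ∑ i, f (i, i) :=
    sum_nbij' Prod.fst (fun i => (i, i)) (by simp) (by simp)
      (fun p hp => Prod.ext rfl (mem_filter.1 hp).2) (by simp)
      (fun p hp => congrArg f (Prod.ext rfl (mem_filter.1 hp).2.symm))
  have hswap : ∑ p : ι × ι with p.2 < p.1, f p = ∑ p : ι × ι with p.1 < p.2, f p.swap :=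
    sum_nbij' Prod.swap Prod.swap (by simp) (by simp) (by simp) (by simp) (by simp)
  rw [sum_congr rfl fun p _ => hsplit p, sum_add_distrib, sum_add_distrib, ← sum_filter,
    ← sum_filter, ← sum_filter, hdiag, hswap, sum_add_distrib]

namespace Module.Basis

variable {ι K : Type*} [Fintype ι] [CommRing K] [Algebra (ZMod 2) K]

/-- `x ⊙_B y` in the paper. -/
noncomputable def coordMul (B : Basis ι (ZMod 2) K) (x y : K) : K :=
  ∑ i, (B.repr x i * B.repr y i) • B i

/-- `μ_B` in the paper. -/
noncomputable def crossSum [LinearOrder ι] (B : Basis ι (ZMod 2) K) (x : K) : K :=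
  ∑ p : ι × ι with p.1 < p.2, (B.repr x p.1 * B.repr x p.2) • (B p.1 * B p.2)

theorem mul_eq_sum_repr_mul_repr (B : Basis ι (ZMod 2) K) (x y : K) :
    x * y = ∑ p : ι × ι, (B.repr x p.1 * B.repr y p.2) • (B p.1 * B p.2) := by
  conv_lhs => rw [← B.sum_repr x, ← B.sum_repr y]
  rw [sum_mul_sum, ← univ_product_univ, sum_product]
  exact sum_congr rfl fun i _ => sum_congr rfl fun j _ => smul_mul_smul_comm _ _ _ _

theorem crossSum_add_add_crossSum_add_crossSum [LinearOrder ι] (B : Basis ι (ZMod 2) K)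
    (x y : K) :
    B.crossSum (x + y) + B.crossSum x + B.crossSum y
      = ∑ p : ι × ι with p.1 < p.2, ((B.repr x p.1 * B.repr y p.2) • (B p.1 * B p.2)
          + (B.repr x p.2 * B.repr y p.1) • (B p.2 * B p.1)) := by
  have hcoeff : ∀ a b c d : ZMod 2, (a + c) * (b + d) + a * b + c * d = a * d + b * c := by
    decide
  simp only [crossSum, ← sum_add_distrib]
  refine sum_congr rfl fun p _ => ?_
  rw [map_add, Finsupp.add_apply, Finsupp.add_apply, mul_comm (B p.2), ← add_smul, ← add_smul,
    ← add_smul, hcoeff]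

variable [CharP K 2]

theorem coordMul_sq (B : Basis ι (ZMod 2) K) (x y : K) :
    B.coordMul x y ^ 2 = ∑ i, (B.repr x i * B.repr y i) • (B i * B i) := by
  rw [coordMul, CharTwo.sum_sq]
  refine sum_congr rfl fun i _ => ?_
  rw [smul_pow, ZMod.pow_card, sq]

theorem crossSum_polar_add_mul [LinearOrder ι] (B : Basis ι (ZMod 2) K) (x y : K) :
    B.crossSum (x + y) + B.crossSum x + B.crossSum y + x * y = B.coordMul x y ^ 2 := by
  rw [crossSum_add_add_crossSum_add_crossSum, mul_eq_sum_repr_mul_repr B x y,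
    sum_prod_univ_eq_sum_diag_add_sum_lt, coordMul_sq]
  simp only [Prod.fst_swap, Prod.snd_swap]
  rw [add_left_comm, CharTwo.add_self_eq_zero, add_zero]

end Module.Basis

theorem bijective_sq_add_comp_iff {α K : Type*} [CommRing K] [PerfectRing K 2] (g : α → K)
    (c d : K) : Bijective (fun x => (g x + c) ^ 2 + d) ↔ Bijective g :=
  ((Equiv.addRight d).bijective.comp
    (PerfectRing.bijective_frobenius.comp (Equiv.addRight c).bijective)).of_comp_iff' g

theorem stmt1_general (n : ℕ)
    (B : Module.Basis (Fin n) (ZMod 2) (GaloisField 2 n))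
    (h : GaloisField 2 n → GaloisField 2 n)
    (odotB : GaloisField 2 n → GaloisField 2 n → GaloisField 2 n)
    (hodotB : ∀ x y, odotB x y = ∑ i, (B.repr x i * B.repr y i) • B i)
    (muB : GaloisField 2 n → GaloisField 2 n)
    (hmuB : ∀ x, muB x =
      ∑ p ∈ Finset.univ.filter (fun p : Fin n × Fin n => p.1 < p.2),
        (B.repr x p.1 * B.repr x p.2) • (B p.1 * B p.2))
    (fB : GaloisField 2 n → GaloisField 2 n)
    (hfB : ∀ x, fB x = h x ^ 2 + muB x) :
    (∀ a x : GaloisField 2 n,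
        fB (x + a) + fB x + fB a + x * a
          = (h (x + a) + h x + h a + odotB x a) ^ 2) ∧
    ((∀ a : GaloisField 2 n, a ≠ 0 →
        Bijective (fun x => h (x + a) + h x + odotB x a)) ↔ IsPlanar fB) := by
  obtain rfl : odotB = B.coordMul := funext₂ hodotB
  obtain rfl : muB = B.crossSum := funext hmuB
  have hderiv : ∀ a x, fB (x + a) + fB x + fB a + x * a
      = (h (x + a) + h x + h a + B.coordMul x a) ^ 2 := by
    intro a x
    simp only [hfB, CharTwo.add_sq, ← B.crossSum_polar_add_mul]
    ring
  refine ⟨hderiv, forall₂_congr fun a _ => ?_⟩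
  have hdiff : (fun x => fB (x + a) + fB x + a * x)
      = fun x => ((h (x + a) + h x + B.coordMul x a) + h a) ^ 2 + fB a := by
    funext x
    linear_combination hderiv a x - fB a * CharTwo.two_eq_zero (R := GaloisField 2 n)
  rw [hdiff, bijective_sq_add_comp_iff (fun x => h (x + a) + h x + B.coordMul x a)]

/-- with `B` a basis of F_{2ⁿ} over F₂, `x ⊙_B y = Σ xᵢyᵢξᵢ`,
`μ_B(x) = Σ_{i<j} xᵢxⱼξᵢξⱼ` and `f_B(x) = h(x)² + μ_B(x)`, we have
(i) `f_B(x+a) + f_B(x) + f_B(a) + xa = (h(x+a) + h(x) + h(a) + x ⊙_B a)²`, and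
(ii) `x ↦ h(x+a) + h(x) + x ⊙_B a` is bijective for all `a ≠ 0` iff `f_B` is planar. -/
theorem stmt1 (n : ℕ) (hn : 0 < n)
    (B : Module.Basis (Fin n) (ZMod 2) (GaloisField 2 n))
    (h : GaloisField 2 n → GaloisField 2 n)
    (odotB : GaloisField 2 n → GaloisField 2 n → GaloisField 2 n)
    (hodotB : ∀ x y, odotB x y = ∑ i, (B.repr x i * B.repr y i) • B i)
    (muB : GaloisField 2 n → GaloisField 2 n)
    (hmuB : ∀ x, muB x =
      ∑ p ∈ Finset.univ.filter (fun p : Fin n × Fin n => p.1 < p.2),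
        (B.repr x p.1 * B.repr x p.2) • (B p.1 * B p.2))
    (fB : GaloisField 2 n → GaloisField 2 n)
    (hfB : ∀ x, fB x = h x ^ 2 + muB x) :
    (∀ a x : GaloisField 2 n,
        fB (x + a) + fB x + fB a + x * a
          = (h (x + a) + h x + h a + odotB x a) ^ 2) ∧
    ((∀ a : GaloisField 2 n, a ≠ 0 →
        Bijective (fun x => h (x + a) + h x + odotB x a)) ↔ IsPlanar fB) :=
  stmt1_general n B h odotB hodotB muB hmuB fB hfB
end

section
/- Let D_1, D_2 ⊆ (Z/4)^n be (2^n,2^n,2^n,1)-relative difference sets relative to 2(Z/4)^n, with F_2^n-representations h_1, h_2 satisfying h_1(0) = h_2(0) = 0. Let M : F_2^n → F_2^n be an F_2-linear bijection with matrix U ∈ M_n(F_2). Then the following are equivalent: (i) there exists L ∈ M_n(Z/4) whose reduction modulo 2 equals U and such that ρ(L)(D_1) = D_2; (ii) M(x) *_{h_2} M(y) = M(x *_{h_1} y) for all x, y ∈ F_2^n. -/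
open Function

/-- The multiplication `x *_h y := h(x+y) + h(x) + h(y) + x ⊙ y` on F₂ⁿ. -/
def starMul {n : ℕ} (h : (Fin n → ZMod 2) → (Fin n → ZMod 2))
    (x y : Fin n → ZMod 2) : Fin n → ZMod 2 :=
  h (x + y) + h x + h y + odot x y

/-!
Write elements of `(ℤ/4)ⁿ` in 2-adic digits as `Ψ(a) + 2Ψ(b)`. If `L` reduces to `U` mod 2,
then `L (Ψ d + 2Ψ e) = Ψ(U d) + 2Ψ(θ_L d + U e)`, where `θ_L` (`quadraticPart L`) is quadratic
with polar form `(U x) ⊙ (U y) + U (x ⊙ y)`. Hence `L` maps `D_{h₁}` onto `D_{h₂}` iff the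
defect `g_L d = h₂(U d) - θ_L d - U h₁(d)` (`liftDefect`) vanishes, while
`M(x) *_{h₂} M(y) - M(x *_{h₁} y)` is the second difference `g_L(x+y) - g_L x - g_L y`.
Conversely, replacing `L` by `L + 2B̃` (with `B̃` the digit-wise lift of `B`) shifts `g_L` by
`-B`; so if `g_L` is additive, hence linear, taking `B` to be its matrix gives a lift with
vanishing defect.
-/

open Matrix

namespace Z4

def highBit (v : ZMod 4) : ZMod 2 := (v.val / 2 : ℕ)

abbrev reduce : ZMod 4 →+* ZMod 2 := ZMod.castHom (by norm_num) (ZMod 2)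

lemma reduce_psi : ∀ a : ZMod 2, reduce (psi a) = a := by decide

lemma reduce_psi_add_two_mul_psi : ∀ a b : ZMod 2, reduce (psi a + 2 * psi b) = a := by decide

lemma highBit_psi_add_two_mul_psi : ∀ a b : ZMod 2, highBit (psi a + 2 * psi b) = b := by decide

lemma psi_reduce_add_two_mul_psi_highBit :
    ∀ v : ZMod 4, psi (reduce v) + 2 * psi (highBit v) = v := by
  decide

lemma highBit_add :
    ∀ v w : ZMod 4, highBit (v + w) = highBit v + highBit w + reduce v * reduce w := by
  decide

lemma highBit_add_two_mul_psi :
    ∀ (v : ZMod 4) (c : ZMod 2), highBit (v + 2 * psi c) = highBit v + c := by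
  decide

lemma two_mul_psi_reduce : ∀ v : ZMod 4, 2 * psi (reduce v) = 2 * v := by decide

lemma psi_add : ∀ a b : ZMod 2, psi (a + b) = psi a + psi b + 2 * psi (a * b) := by decide

lemma two_mul_psi_add : ∀ a b : ZMod 2, 2 * psi (a + b) = 2 * psi a + 2 * psi b := by decide

lemma reduce_add_two_mul_psi : ∀ (v : ZMod 4) (b : ZMod 2), reduce (v + 2 * psi b) = reduce v := by
  decide

variable {n : ℕ}

lemma odot_eq_mul (x y : Fin n → ZMod 2) : odot x y = x * y := rfl

def ofDigits (a b : Fin n → ZMod 2) : Fin n → ZMod 4 := Psi a + 2 * Psi b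

def transversalOf (h : (Fin n → ZMod 2) → Fin n → ZMod 2) : Set (Fin n → ZMod 4) :=
  {ξ | ∃ d, ξ = ofDigits d (h d)}

lemma ofDigits_apply (a b : Fin n → ZMod 2) (i : Fin n) :
    ofDigits a b i = psi (a i) + 2 * psi (b i) := rfl

lemma reduce_comp_Psi (a : Fin n → ZMod 2) : reduce ∘ Psi a = a :=
  funext fun i => reduce_psi (a i)

lemma reduce_comp_ofDigits (a b : Fin n → ZMod 2) : reduce ∘ ofDigits a b = a :=
  funext fun i => reduce_psi_add_two_mul_psi (a i) (b i)

lemma highBit_comp_ofDigits (a b : Fin n → ZMod 2) : highBit ∘ ofDigits a b = b :=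
  funext fun i => highBit_psi_add_two_mul_psi (a i) (b i)

lemma ofDigits_reduce_highBit (v : Fin n → ZMod 4) : ofDigits (reduce ∘ v) (highBit ∘ v) = v :=
  funext fun i => psi_reduce_add_two_mul_psi_highBit (v i)

lemma ofDigits_inj {a b a' b' : Fin n → ZMod 2} :
    ofDigits a b = ofDigits a' b' ↔ a = a' ∧ b = b' := by
  refine ⟨fun h => ⟨?_, ?_⟩, fun ⟨ha, hb⟩ => ha ▸ hb ▸ rfl⟩
  · rw [← reduce_comp_ofDigits a b, h, reduce_comp_ofDigits]
  · rw [← highBit_comp_ofDigits a b, h, highBit_comp_ofDigits]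

lemma ofDigits_add_two_mul_Psi (a b c : Fin n → ZMod 2) :
    ofDigits a b + 2 * Psi c = ofDigits a (b + c) :=
  funext fun i => by
    simp only [Pi.add_apply, ofDigits_apply, add_assoc, Pi.mul_apply, Pi.ofNat_apply]
    rw [two_mul_psi_add]
    rfl

lemma Psi_add (a b : Fin n → ZMod 2) : Psi (a + b) = Psi a + Psi b + 2 * Psi (a * b) :=
  funext fun i => psi_add (a i) (b i)

lemma two_mul_Psi_reduce (v : Fin n → ZMod 4) : 2 * Psi (reduce ∘ v) = 2 * v :=
  funext fun i => two_mul_psi_reduce (v i)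

lemma highBit_comp_add (v w : Fin n → ZMod 4) :
    highBit ∘ (v + w) = highBit ∘ v + highBit ∘ w + (reduce ∘ v) * (reduce ∘ w) :=
  funext fun i => highBit_add (v i) (w i)

lemma highBit_comp_add_two_mul_Psi (v : Fin n → ZMod 4) (c : Fin n → ZMod 2) :
    highBit ∘ (v + 2 * Psi c) = highBit ∘ v + c :=
  funext fun i => highBit_add_two_mul_psi (v i) (c i)

lemma map_psi_map_reduce (B : Matrix (Fin n) (Fin n) (ZMod 2)) : (B.map psi).map reduce = B := by
  ext i j
  exact reduce_psi (B i j)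

section Lift

variable {L : Matrix (Fin n) (Fin n) (ZMod 4)} {U : Matrix (Fin n) (Fin n) (ZMod 2)}

lemma map_reduce_add_two_smul_map_psi (B : Matrix (Fin n) (Fin n) (ZMod 2)) :
    (L + (2 : ZMod 4) • B.map psi).map reduce = L.map reduce := by
  ext i j
  exact reduce_add_two_mul_psi (L i j) (B i j)

lemma reduce_comp_mulVec (hL : L.map reduce = U) (v : Fin n → ZMod 4) :
    reduce ∘ (L *ᵥ v) = U *ᵥ (reduce ∘ v) := by
  subst hL
  exact funext (RingHom.map_mulVec reduce L v)

lemma mulVec_two_mul (hL : L.map reduce = U) (v : Fin n → ZMod 4) :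
    L *ᵥ (2 * v) = 2 * Psi (U *ᵥ (reduce ∘ v)) := by
  rw [← reduce_comp_mulVec hL, two_mul_Psi_reduce]
  exact mulVec_smul L (2 : ZMod 4) v

def quadraticPart (L : Matrix (Fin n) (Fin n) (ZMod 4)) (d : Fin n → ZMod 2) : Fin n → ZMod 2 :=
  highBit ∘ (L *ᵥ Psi d)

lemma mulVec_ofDigits (hL : L.map reduce = U) (a b : Fin n → ZMod 2) :
    L *ᵥ ofDigits a b = ofDigits (U *ᵥ a) (quadraticPart L a + U *ᵥ b) := by
  have hPsi : L *ᵥ Psi a = ofDigits (U *ᵥ a) (quadraticPart L a) := by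
    conv_lhs => rw [← ofDigits_reduce_highBit (L *ᵥ Psi a)]
    rw [reduce_comp_mulVec hL, reduce_comp_Psi]
    rfl
  rw [ofDigits, mulVec_add, hPsi, mulVec_two_mul hL, reduce_comp_Psi, ofDigits_add_two_mul_Psi]

lemma quadraticPart_add (hL : L.map reduce = U) (x y : Fin n → ZMod 2) :
    quadraticPart L (x + y) =
      quadraticPart L x + quadraticPart L y + (U *ᵥ x) * (U *ᵥ y) + U *ᵥ (x * y) := by
  rw [quadraticPart, Psi_add, mulVec_add, mulVec_add, mulVec_two_mul hL, reduce_comp_Psi,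
    highBit_comp_add_two_mul_Psi, highBit_comp_add, reduce_comp_mulVec hL, reduce_comp_mulVec hL,
    reduce_comp_Psi, reduce_comp_Psi]
  rfl

lemma quadraticPart_add_two_smul_map_psi (B : Matrix (Fin n) (Fin n) (ZMod 2))
    (d : Fin n → ZMod 2) :
    quadraticPart (L + (2 : ZMod 4) • B.map psi) d = quadraticPart L d + B *ᵥ d := by
  have h2 : ((2 : ZMod 4) • B.map psi) *ᵥ Psi d = 2 * Psi (B *ᵥ d) := by
    rw [smul_mulVec, ← mulVec_smul]
    exact (mulVec_two_mul (map_psi_map_reduce B) (Psi d)).trans (by rw [reduce_comp_Psi])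
  rw [quadraticPart, add_mulVec, h2, highBit_comp_add_two_mul_Psi]
  rfl

def liftDefect (U : Matrix (Fin n) (Fin n) (ZMod 2)) (L : Matrix (Fin n) (Fin n) (ZMod 4))
    (h₁ h₂ : (Fin n → ZMod 2) → Fin n → ZMod 2) (d : Fin n → ZMod 2) : Fin n → ZMod 2 :=
  h₂ (U *ᵥ d) - quadraticPart L d - U *ᵥ h₁ d

variable {h₁ h₂ : (Fin n → ZMod 2) → Fin n → ZMod 2}

lemma liftDefect_add_two_smul_map_psi (B : Matrix (Fin n) (Fin n) (ZMod 2)) (d : Fin n → ZMod 2) :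
    liftDefect U (L + (2 : ZMod 4) • B.map psi) h₁ h₂ d = liftDefect U L h₁ h₂ d - B *ᵥ d := by
  rw [liftDefect, liftDefect, quadraticPart_add_two_smul_map_psi]
  abel

lemma image_transversalOf_eq_iff (hL : L.map reduce = U) (hU : Surjective (U *ᵥ ·)) :
    (L *ᵥ ·) '' transversalOf h₁ = transversalOf h₂ ↔ liftDefect U L h₁ h₂ = 0 := by
  have hD (d : Fin n → ZMod 2) : liftDefect U L h₁ h₂ d = 0 ↔
      h₂ (U *ᵥ d) = quadraticPart L d + U *ᵥ h₁ d := by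
    rw [liftDefect, sub_sub, sub_eq_zero]
  rw [funext_iff]
  simp only [Pi.zero_apply, hD]
  constructor
  · intro himg d
    obtain ⟨e, he⟩ : L *ᵥ ofDigits d (h₁ d) ∈ transversalOf h₂ := himg ▸ ⟨_, ⟨d, rfl⟩, rfl⟩
    rw [mulVec_ofDigits hL, ofDigits_inj] at he
    rw [he.1, he.2]
  · intro hdefect
    ext ξ
    constructor
    · rintro ⟨_, ⟨d, rfl⟩, rfl⟩
      exact ⟨U *ᵥ d, (mulVec_ofDigits hL _ _).trans (by rw [hdefect])⟩
    · rintro ⟨e, rfl⟩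
      obtain ⟨d, rfl⟩ := hU e
      exact ⟨_, ⟨d, rfl⟩, (mulVec_ofDigits hL _ _).trans (by rw [hdefect])⟩

lemma starMul_mulVec_sub_mulVec_starMul (hL : L.map reduce = U) (x y : Fin n → ZMod 2) :
    starMul h₂ (U *ᵥ x) (U *ᵥ y) - U *ᵥ starMul h₁ x y =
      liftDefect U L h₁ h₂ (x + y) - liftDefect U L h₁ h₂ x - liftDefect U L h₁ h₂ y := by
  simp only [liftDefect, starMul, odot_eq_mul, quadraticPart_add hL, mulVec_add]
  funext i
  simp only [Pi.add_apply, Pi.sub_apply, Pi.mul_apply]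
  grind

end Lift

lemma exists_mulVec_eq_of_map_add {g : (Fin n → ZMod 2) → Fin n → ZMod 2}
    (hg : ∀ x y, g (x + y) = g x + g y) :
    ∃ B : Matrix (Fin n) (Fin n) (ZMod 2), ∀ d, B *ᵥ d = g d :=
  ⟨LinearMap.toMatrix' ((AddMonoidHom.mk' g hg).toZModLinearMap 2),
    fun d => LinearMap.toMatrix'_mulVec _ d⟩

end Z4

open Z4 in
/-- for RDSs `D₁, D₂` with F₂ⁿ-representations `h₁, h₂` vanishing
at 0, and an F₂-linear bijection `M = U·(-)`, there is `L ∈ Mₙ(ℤ/4)` with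
`L mod 2 = U` and `ρ(L)(D₁) = D₂` iff `M(x) *_{h₂} M(y) = M(x *_{h₁} y)`. -/
theorem stmt4 (n : ℕ)
    (h₁ h₂ : (Fin n → ZMod 2) → (Fin n → ZMod 2))
    (D₁ D₂ : Set (Fin n → ZMod 4))
    (hD₁ : D₁ = {ξ | ∃ d : Fin n → ZMod 2, ξ = Psi d + 2 * Psi (h₁ d)})
    (hD₂ : D₂ = {ξ | ∃ d : Fin n → ZMod 2, ξ = Psi d + 2 * Psi (h₂ d)})
    (U : Matrix (Fin n) (Fin n) (ZMod 2))
    (M : (Fin n → ZMod 2) → (Fin n → ZMod 2))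
    (hM : ∀ x, M x = U.mulVec x)
    (hMbij : Bijective M) :
    (∃ L : Matrix (Fin n) (Fin n) (ZMod 4),
        L.map (ZMod.castHom (by norm_num : (2 : ℕ) ∣ 4) (ZMod 2)) = U ∧
        (fun v => L.mulVec v) '' D₁ = D₂) ↔
    (∀ x y : Fin n → ZMod 2, starMul h₂ (M x) (M y) = M (starMul h₁ x y)) := by
  obtain rfl : D₁ = transversalOf h₁ := hD₁
  obtain rfl : D₂ = transversalOf h₂ := hD₂
  obtain rfl : M = (U *ᵥ ·) := funext hM
  constructor
  · rintro ⟨L, hL, himg⟩ x y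
    have hdefect := (image_transversalOf_eq_iff hL hMbij.surjective).1 himg
    rw [← sub_eq_zero, starMul_mulVec_sub_mulVec_starMul hL, hdefect]
    simp
  · intro hstar
    have hL₀ := map_psi_map_reduce U
    obtain ⟨B, hB⟩ := exists_mulVec_eq_of_map_add (g := liftDefect U (U.map psi) h₁ h₂)
      fun x y => by
        rw [← sub_eq_zero, ← sub_sub, ← starMul_mulVec_sub_mulVec_starMul hL₀, hstar, sub_self]
    have hL : (U.map psi + (2 : ZMod 4) • B.map psi).map reduce = U := by
      rw [map_reduce_add_two_smul_map_psi, hL₀]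
    refine ⟨_, hL, (image_transversalOf_eq_iff hL hMbij.surjective).2 ?_⟩
    funext d
    rw [liftDefect_add_two_smul_map_psi, hB, Pi.zero_apply, sub_self]
end

section
/- Let h : F_2^n → F_2^n satisfy h(0) = 0 and suppose that for every a ≠ 0 the map Δ_{h,a}(d) = h(d+a) + h(d) + d ⊙ a is a bijection of F_2^n. Then (F_2^n, +, *_h) is a commutative presemifield if and only if h(x+y+z) + h(x+y) + h(x+z) + h(y+z) + h(x) + h(y) + h(z) = 0 for all x, y, z ∈ F_2^n. -/
open Function

/-- `(α, +, mul)` is a finite commutative presemifield: `mul` is commutative,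
distributes over `+` on both sides, and has no zero divisors. -/
def IsCommPresemifield {α : Type*} [AddCommGroup α] (mul : α → α → α) : Prop :=
  (∀ x y, mul x y = mul y x) ∧
  (∀ x y z, mul x (y + z) = mul x y + mul x z) ∧
  (∀ x y z, mul (x + y) z = mul x z + mul y z) ∧
  (∀ x y, mul x y = 0 → x = 0 ∨ y = 0)

/-!
Since `⊙` is symmetric and bilinear and every element of F₂ⁿ is its own negative, expanding
`x *_h (y + z) + x *_h y + x *_h z` leaves exactly the cubic expression
`h(x+y+z) + h(x+y) + h(x+z) + h(y+z) + h(x) + h(y) + h(z)`; so distributivity is equivalent to its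
vanishing, while commutativity holds for every `h`. Moreover `x *_h a = Δ_{h,a}(x) + Δ_{h,a}(0)`
when `h(0) = 0`, so injectivity of `Δ_{h,a}` for `a ≠ 0` excludes zero divisors.
-/

namespace StarMul

variable {n : ℕ}

lemma odot_eq_mul (x y : Fin n → ZMod 2) : odot x y = x * y := rfl

lemma two_eq_zero : (2 : Fin n → ZMod 2) = 0 := funext fun _ => (by decide : (2 : ZMod 2) = 0)

lemma eq_iff_add_eq_zero (a b : Fin n → ZMod 2) : a = b ↔ a + b = 0 := by
  rw [← sub_eq_zero]
  constructor
  · intro hab; linear_combination hab + b * two_eq_zero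
  · intro hab; linear_combination hab - b * two_eq_zero

variable (h : (Fin n → ZMod 2) → (Fin n → ZMod 2))

lemma starMul_comm (x y : Fin n → ZMod 2) : starMul h x y = starMul h y x := by
  simp only [starMul, odot_eq_mul, add_comm x y, mul_comm x y]
  ring

lemma starMul_add_right_add (x y z : Fin n → ZMod 2) :
    starMul h x (y + z) + (starMul h x y + starMul h x z) =
      h (x + y + z) + h (x + y) + h (x + z) + h (y + z) + h x + h y + h z := by
  simp only [starMul, odot_eq_mul, ← add_assoc]
  linear_combination (h x + x * y + x * z) * two_eq_zero

lemma starMul_add_right_iff (x y z : Fin n → ZMod 2) :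
    starMul h x (y + z) = starMul h x y + starMul h x z ↔
      h (x + y + z) + h (x + y) + h (x + z) + h (y + z) + h x + h y + h z = 0 := by
  rw [eq_iff_add_eq_zero, starMul_add_right_add]

lemma eq_zero_of_starMul_eq_zero (h0 : h 0 = 0) {x a : Fin n → ZMod 2}
    (hinj : Injective fun d : Fin n → ZMod 2 => h (d + a) + h d + odot d a)
    (hxa : starMul h x a = 0) : x = 0 := by
  refine hinj ?_
  simp only [starMul, odot_eq_mul] at hxa
  simp only [zero_add, h0, odot_eq_mul, zero_mul, add_zero]
  linear_combination hxa - h a * two_eq_zero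

end StarMul

open StarMul in
theorem stmt5_general (n : ℕ)
    (h : (Fin n → ZMod 2) → (Fin n → ZMod 2)) (h0 : h 0 = 0)
    (hbij : ∀ a : Fin n → ZMod 2, a ≠ 0 →
      Bijective (fun d : Fin n → ZMod 2 => h (d + a) + h d + odot d a)) :
    IsCommPresemifield (starMul h) ↔
    (∀ x y z : Fin n → ZMod 2,
      h (x + y + z) + h (x + y) + h (x + z) + h (y + z) + h x + h y + h z = 0) := by
  constructor
  · rintro ⟨-, hleft, -, -⟩ x y z
    exact (starMul_add_right_iff h x y z).1 (hleft x y z)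
  · intro hcubic
    have hleft : ∀ x y z, starMul h x (y + z) = starMul h x y + starMul h x z :=
      fun x y z => (starMul_add_right_iff h x y z).2 (hcubic x y z)
    refine ⟨starMul_comm h, hleft, fun x y z => ?_, fun x y hxy => ?_⟩
    · simpa only [starMul_comm h _ z] using hleft z x y
    · exact or_iff_not_imp_right.2 fun hy =>
        eq_zero_of_starMul_eq_zero h h0 (hbij y hy).injective hxy

/-- if `h(0) = 0` and `Δ_{h,a}` is bijective for all `a ≠ 0`, then
`(F₂ⁿ, +, *_h)` is a commutative presemifield iff
`h(x+y+z) + h(x+y) + h(x+z) + h(y+z) + h(x) + h(y) + h(z) = 0` for all `x,y,z`. -/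
theorem stmt5 (n : ℕ) (hn : 0 < n)
    (h : (Fin n → ZMod 2) → (Fin n → ZMod 2)) (h0 : h 0 = 0)
    (hbij : ∀ a : Fin n → ZMod 2, a ≠ 0 →
      Bijective (fun d : Fin n → ZMod 2 => h (d + a) + h d + odot d a)) :
    IsCommPresemifield (starMul h) ↔
    (∀ x y z : Fin n → ZMod 2,
      h (x + y + z) + h (x + y) + h (x + z) + h (y + z) + h x + h y + h z = 0) :=
  stmt5_general n h h0 hbij
end

section
/- Let f ∈ F_{2^n}[x] be a reduced polynomial (degree < 2^n) with no constant term and no monomials of the form u·x^{2^i}, inducing the function f : F_{2^n} → F_{2^n}. Then f(x+y+z) + f(x+y) + f(x+z) + f(y+z) + f(x) + f(y) + f(z) = 0 for all x, y, z ∈ F_{2^n} if and only if f is a Dembowski–Ostrom polynomial, i.e. every monomial of f has exponent of the form 2^i + 2^j with 0 ≤ i < j ≤ n−1. -/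
/-!
A monomial `x ^ (2 ^ i + 2 ^ j)` is the product of the additive maps `x ↦ x ^ 2 ^ i` and
`x ↦ x ^ 2 ^ j`, so its third difference expands into bilinear terms each of which occurs an even
number of times; in characteristic 2 it vanishes.

Conversely, for `a, b, c > 0` the coefficient of `x^a y^b z^c` in
`f(x+y+z) + f(x+y) + ⋯ + f(z)` is `(a+b+c)! / (a! b! c!) * f_{a+b+c}`, and since `deg f < |F|` a
vanishing third difference forces all these products to vanish. This is read off one variable at a
time, by taking Hasse derivatives (Taylor coefficients) in `x`, then `y`, then `z`. If `k` has at
least three binary digits, split `k = 2^s + 2^t + c` at its two lowest ones: by Lucas' theorem the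
multinomial coefficient is odd, so `f_k = 0`.
-/

open Polynomial Cardinal

/-- In characteristic 2 and for `φ 0 = 0`, this is the third derivative `D_x D_y D_z φ (0)`. -/
def thirdDifference {M G : Type*} [Add M] [Add G] (φ : M → G) (x y z : M) : G :=
  φ (x + y + z) + φ (x + y) + φ (x + z) + φ (y + z) + φ x + φ y + φ z

theorem thirdDifference_pow_two_pow_add_two_pow {R : Type*} [CommRing R] [CharP R 2] (i j : ℕ)
    (x y z : R) : thirdDifference (· ^ (2 ^ i + 2 ^ j)) x y z = 0 := by
  have frob (u v : R) (m : ℕ) : (u + v) ^ 2 ^ m = u ^ 2 ^ m + v ^ 2 ^ m := add_pow_char_pow ..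
  simp only [thirdDifference, pow_add, frob]
  grind

theorem Nat.odd_choose_two_pow_add {s d : ℕ} (hd : 2 ^ (s + 1) ∣ d) :
    Odd ((2 ^ s + d).choose (2 ^ s)) := by
  obtain ⟨e, rfl⟩ := hd
  have h := Choose.choose_pow_mul_pow_mul_modEq_choose_nat (p := 2) (k := s) (a := 2 * e + 1)
    (b := 1)
  rw [mul_one, Nat.choose_one_right,
    show 2 ^ s * (2 * e + 1) = 2 ^ s + 2 ^ (s + 1) * e by ring] at h
  rw [Nat.odd_iff, h]
  omega

theorem Nat.exists_eq_two_pow_add_two_pow_add_of_length_bitIndices {k : ℕ}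
    (hk : 3 ≤ k.bitIndices.length) :
    ∃ s t c, s < t ∧ c ≠ 0 ∧ 2 ^ (t + 1) ∣ c ∧ k = 2 ^ s + 2 ^ t + c := by
  have hsum := Nat.sum_map_two_pow_bitIndices k
  have hsort := (Nat.bitIndices_sorted (n := k)).pairwise
  obtain ⟨s, t, u, rest, hL⟩ : ∃ s t u rest, k.bitIndices = s :: t :: u :: rest := by
    rcases hL : k.bitIndices with _ | ⟨s, _ | ⟨t, _ | ⟨u, rest⟩⟩⟩ <;> simp_all
  rw [hL] at hsum hsort
  simp only [List.pairwise_cons, List.mem_cons] at hsort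
  refine ⟨s, t, ((u :: rest).map (2 ^ ·)).sum, hsort.1 t (by simp), ?_, ?_, ?_⟩
  · simp
  · refine List.dvd_sum fun m hm => ?_
    obtain ⟨v, hv, rfl⟩ := List.mem_map.mp hm
    exact pow_dvd_pow 2 (hsort.2.1 v (List.mem_cons.mp hv))
  · simpa [add_assoc] using hsum.symm

namespace Polynomial

section CommRing

variable {R : Type*} [CommRing R]

theorem thirdDifference_eval_eq_sum (f : R[X]) (x y z : R) :
    thirdDifference f.eval x y z =
      ∑ k ∈ f.support, f.coeff k * thirdDifference (· ^ k) x y z := by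
  simp only [thirdDifference, eval_eq_sum, sum_def, mul_add, Finset.sum_add_distrib]

theorem thirdDifference_eval_eq_zero [CharP R 2] (f : R[X])
    (hf : ∀ k ∈ f.support, ∃ i j, k = 2 ^ i + 2 ^ j) (x y z : R) :
    thirdDifference f.eval x y z = 0 := by
  rw [thirdDifference_eval_eq_sum]
  refine Finset.sum_eq_zero fun k hk => ?_
  obtain ⟨i, j, rfl⟩ := hf k hk
  rw [thirdDifference_pow_two_pow_add_two_pow, mul_zero]

end CommRing

section IsDomain

variable {R : Type*} [CommRing R] [IsDomain R]

theorem sum_eval_hasseDeriv_eq_zero {p : R[X]} (hp : (p.natDegree : Cardinal) < #R)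
    {ι : Type*} (s : Finset ι) (r : ι → R) (e : R)
    (h : ∀ x, ∑ i ∈ s, p.eval (x + r i) = e) {k : ℕ} (hk : k ≠ 0) :
    ∑ i ∈ s, (hasseDeriv k p).eval (r i) = 0 := by
  -- `Q` is a polynomial of degree `< #R` that evaluates to the constant `e`, so `Q = C e`.
  set Q := ∑ i ∈ s, taylor (r i) p
  have hQ : Q.natDegree ≤ p.natDegree :=
    natDegree_sum_le_of_forall_le _ _ fun i _ => (natDegree_taylor p (r i)).le
  have hQC : Q - C e = 0 := by
    refine eq_zero_of_forall_eval_zero_of_natDegree_lt_card _ (fun x => ?_) ?_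
    · simp [Q, eval_finsetSum, taylor_eval, h]
    · exact lt_of_le_of_lt (Nat.cast_le.mpr ((natDegree_sub_le _ _).trans (by simpa))) hp
  simpa [Q, finsetSum_coeff, taylor_coeff, coeff_C, hk] using congrArg (coeff · k) hQC

theorem choose_mul_choose_mul_coeff_eq_zero {f : R[X]} (hf : (f.natDegree : Cardinal) < #R)
    (h : ∀ x y z, thirdDifference f.eval x y z = 0) {a b c : ℕ} (ha : a ≠ 0) (hb : b ≠ 0)
    (hc : c ≠ 0) : ((a + b + c).choose a * (b + c).choose b : R) * f.coeff (a + b + c) = 0 := by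
  simp only [thirdDifference] at h
  have hdeg {g : R[X]} (k : ℕ) (hg : (g.natDegree : Cardinal) < #R) :
      ((hasseDeriv k g).natDegree : Cardinal) < #R :=
    lt_of_le_of_lt (Nat.cast_le.mpr ((natDegree_hasseDeriv_le g k).trans (Nat.sub_le _ _))) hg
  set g := hasseDeriv a f
  have hg (y z : R) : g.eval (y + z) + g.eval y + g.eval z + g.eval 0 = 0 := by
    simpa [Fin.sum_univ_four, add_assoc] using sum_eval_hasseDeriv_eq_zero hf Finset.univ
      ![y + z, y, z, 0] (-(f.eval (y + z) + f.eval y + f.eval z)) (fun x => by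
        simp only [Fin.sum_univ_four, Matrix.cons_val, add_zero, ← add_assoc]
        linear_combination h x y z) ha
  set g' := hasseDeriv b g
  have hg' (z : R) : g'.eval z + g'.eval 0 = 0 := by
    simpa [Fin.sum_univ_two] using sum_eval_hasseDeriv_eq_zero (hdeg a hf) Finset.univ
      ![z, 0] (-(g.eval z + g.eval 0)) (fun y => by
        simp only [Fin.sum_univ_two, Matrix.cons_val_zero, Matrix.cons_val_one,
          Matrix.cons_val_fin_one, add_zero]
        linear_combination hg y z) hb
  have hg'' : (hasseDeriv c g').eval 0 = 0 := by
    simpa using sum_eval_hasseDeriv_eq_zero (hdeg b (hdeg a hf)) Finset.univ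
      ![0] (-g'.eval 0) (fun z => by
        simp only [Fin.sum_univ_one, Matrix.cons_val_fin_one, add_zero]
        linear_combination hg' z) hc
  rw [← coeff_zero_eq_eval_zero, hasseDeriv_coeff, hasseDeriv_coeff, hasseDeriv_coeff] at hg''
  rw [← hg'']
  simp only [zero_add, Nat.choose_self, Nat.cast_one, one_mul]
  rw [add_comm c b, add_comm (b + c) a, ← add_assoc]
  ring

theorem coeff_eq_zero_of_three_le_length_bitIndices [CharP R 2] {f : R[X]}
    (hf : (f.natDegree : Cardinal) < #R) (h : ∀ x y z, thirdDifference f.eval x y z = 0)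
    {k : ℕ} (hk : 3 ≤ k.bitIndices.length) : f.coeff k = 0 := by
  obtain ⟨s, t, c, hst, hc, hdvd, rfl⟩ :=
    Nat.exists_eq_two_pow_add_two_pow_add_of_length_bitIndices hk
  have hodd₁ : Odd ((2 ^ s + 2 ^ t + c).choose (2 ^ s)) := by
    rw [add_assoc]
    exact Nat.odd_choose_two_pow_add
      (dvd_add (pow_dvd_pow 2 hst) ((pow_dvd_pow 2 (by omega)).trans hdvd))
  have hodd₂ : Odd ((2 ^ t + c).choose (2 ^ t)) := Nat.odd_choose_two_pow_add hdvd
  simpa [natCast_eq_one_of_odd_of_two_eq_zero _ (CharTwo.two_eq_zero (R := R)), hodd₁, hodd₂]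
    using choose_mul_choose_mul_coeff_eq_zero hf h (a := 2 ^ s) (b := 2 ^ t) (by simp) (by simp) hc

theorem exists_eq_two_pow_add_two_pow_of_coeff_ne_zero [CharP R 2] {f : R[X]}
    (hf : (f.natDegree : Cardinal) < #R) (h : ∀ x y z, thirdDifference f.eval x y z = 0)
    (hconst : f.coeff 0 = 0) (hlin : ∀ i, f.coeff (2 ^ i) = 0) {k : ℕ} (hk : f.coeff k ≠ 0) :
    ∃ i j, i < j ∧ k = 2 ^ i + 2 ^ j := by
  have hsum := Nat.sum_map_two_pow_bitIndices k
  rcases hL : k.bitIndices with _ | ⟨s, _ | ⟨t, _ | ⟨u, rest⟩⟩⟩ <;> rw [hL] at hsum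
  · simp_all
  · subst hsum
    exact absurd (hlin s) hk
  · have hst : s < t := by simpa [hL] using (Nat.bitIndices_sorted (n := k)).pairwise
    exact ⟨s, t, hst, by simpa using hsum.symm⟩
  · exact absurd (coeff_eq_zero_of_three_le_length_bitIndices hf h (by simp [hL])) hk

end IsDomain

end Polynomial

/-- a reduced polynomial `f` over F_{2ⁿ} (degree < 2ⁿ) with no
constant term and no monomials `u·x^{2^i}` satisfies
`f(x+y+z) + f(x+y) + f(x+z) + f(y+z) + f(x) + f(y) + f(z) = 0` for all `x,y,z`
iff `f` is a Dembowski–Ostrom polynomial, i.e. every monomial of `f` has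
exponent of the form `2^i + 2^j` with `0 ≤ i < j ≤ n−1`. -/
theorem stmt7 (n : ℕ) (hn : 0 < n) (f : Polynomial (GaloisField 2 n))
    (hdeg : f.natDegree < 2 ^ n)
    (hconst : f.coeff 0 = 0)
    (hlin : ∀ i : ℕ, f.coeff (2 ^ i) = 0) :
    (∀ x y z : GaloisField 2 n,
      f.eval (x + y + z) + f.eval (x + y) + f.eval (x + z) + f.eval (y + z)
        + f.eval x + f.eval y + f.eval z = 0) ↔
    (∀ k ∈ f.support, ∃ i j : ℕ, i < j ∧ j ≤ n - 1 ∧ k = 2 ^ i + 2 ^ j) := by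
  have hcard : (f.natDegree : Cardinal) < #(GaloisField 2 n) := by
    rw [← Nat.cast_card, GaloisField.card 2 n hn.ne']
    exact_mod_cast hdeg
  change (∀ x y z, thirdDifference f.eval x y z = 0) ↔ _
  refine ⟨fun h k hk => ?_, fun h => thirdDifference_eval_eq_zero f fun k hk => ?_⟩
  · obtain ⟨i, j, hij, rfl⟩ :=
      exists_eq_two_pow_add_two_pow_of_coeff_ne_zero hcard h hconst hlin (mem_support_iff.mp hk)
    have hj : 2 ^ j < 2 ^ n :=
      (Nat.le_add_left _ _).trans_lt ((le_natDegree_of_mem_supp _ hk).trans_lt hdeg)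
    have := (Nat.pow_lt_pow_iff_right one_lt_two).mp hj
    exact ⟨i, j, hij, by omega, rfl⟩
  · obtain ⟨i, j, -, -, hk⟩ := h k hk
    exact ⟨i, j, hk⟩
end

section
/- Let D_1, D_2 ⊆ (Z/4)^n be (2^n,2^n,2^n,1)-relative difference sets relative to 2(Z/4)^n, both containing 0, whose F_2^n-representations h_1, h_2 satisfy h_i(x+y+z) + h_i(x+y) + h_i(x+z) + h_i(y+z) + h_i(x) + h_i(y) + h_i(z) = 0 for all x, y, z ∈ F_2^n and i = 1, 2 (i.e. both RDSs define commutative semifields). If there exist an automorphism α of the group (Z/4)^n and an element g ∈ (Z/4)^n such that α(D_1) = D_2 + g, then there exists an automorphism β of the group (Z/4)^n such that β(D_1) = D_2. -/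
open Function

/-!
Since `0 ∈ D₁`, the hypothesis `α(D₁) = D₂ + g` forces `-g = Ψ a + 2 Ψ (h₂ a) ∈ D₂`, so it
suffices to map the translate `D₂ + g` back onto `D₂` by an automorphism. Computing in `(ℤ/4)ⁿ`,
the translate consists of the points `Ψ y + 2 Ψ (h₂ (y + a) + h₂ a + y a)`, where the
coordinatewise product `y a` is the carry of `Ψ (y + a) - Ψ a`. These differ from the points of
`D₂` by `2 Ψ (M y)` with `M y = h₂ (y + a) + h₂ y + h₂ a + y a`, and `M` is additive exactly
because `h₂` is quadratic. Hence the shear `v ↦ v + 2 Ψ (M (v mod 2))`, an automorphism of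
`(ℤ/4)ⁿ`, carries `D₂ + g` onto `D₂`.
-/

section

variable {n : ℕ}

def mod2 : ZMod 4 →+* ZMod 2 := ZMod.castHom (by norm_num) (ZMod 2)

def reduceMod2 {ι : Type*} : (ι → ZMod 4) →+ (ι → ZMod 2) :=
  AddMonoidHom.compLeft mod2.toAddMonoidHom ι

lemma reduceMod2_Psi (y : Fin n → ZMod 2) : reduceMod2 (Psi y) = y :=
  funext fun i => (by decide : ∀ b : ZMod 2, mod2 (psi b) = b) (y i)

lemma reduceMod2_two_mul_Psi (w : Fin n → ZMod 2) : reduceMod2 (2 * Psi w) = 0 :=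
  funext fun i => (by decide : ∀ b : ZMod 2, mod2 (2 * psi b) = 0) (w i)

lemma two_mul_Psi_add (u v : Fin n → ZMod 2) : 2 * Psi (u + v) = 2 * Psi u + 2 * Psi v :=
  funext fun i =>
    (by decide : ∀ b c : ZMod 2, 2 * psi (b + c) = 2 * psi b + 2 * psi c) (u i) (v i)

lemma two_mul_Psi_add_self (w : Fin n → ZMod 2) : 2 * Psi w + 2 * Psi w = 0 :=
  funext fun i => (by decide : ∀ b : ZMod 2, 2 * psi b + 2 * psi b = 0) (w i)

lemma Psi_add_sub_Psi (u v : Fin n → ZMod 2) :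
    Psi (u + v) - Psi v = Psi u + 2 * Psi (u * v) :=
  funext fun i =>
    (by decide : ∀ b c : ZMod 2, psi (b + c) - psi c = psi b + 2 * psi (b * c)) (u i) (v i)

lemma add_add_self_right (u v : Fin n → ZMod 2) : u + v + v = u :=
  funext fun i => (by decide : ∀ b c : ZMod 2, b + c + c = b) (u i) (v i)

lemma shear_involutive (M : (Fin n → ZMod 2) →+ (Fin n → ZMod 2)) :
    Involutive fun v : Fin n → ZMod 4 => v + 2 * Psi (M (reduceMod2 v)) := by
  intro v
  simp only [map_add, reduceMod2_two_mul_Psi, add_zero, add_assoc, two_mul_Psi_add_self]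

def shear (M : (Fin n → ZMod 2) →+ (Fin n → ZMod 2)) : AddAut (Fin n → ZMod 4) :=
  { (shear_involutive M).toPerm with
    map_add' := fun v w => by
      change v + w + _ = (v + _) + (w + _)
      rw [map_add, map_add, two_mul_Psi_add]
      abel }

lemma shear_apply_Psi_add (M : (Fin n → ZMod 2) →+ (Fin n → ZMod 2)) (y w : Fin n → ZMod 2) :
    shear M (Psi y + 2 * Psi w) = Psi y + 2 * Psi (w + M y) := by
  change Psi y + 2 * Psi w + 2 * Psi (M (reduceMod2 (Psi y + 2 * Psi w))) = _
  rw [map_add, reduceMod2_Psi, reduceMod2_two_mul_Psi, add_zero, add_assoc, two_mul_Psi_add]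

def lift (h : (Fin n → ZMod 2) → (Fin n → ZMod 2)) (x : Fin n → ZMod 2) : Fin n → ZMod 4 :=
  Psi x + 2 * Psi (h x)

def setOfRep (h : (Fin n → ZMod 2) → (Fin n → ZMod 2)) : Set (Fin n → ZMod 4) :=
  {ξ | ∃ d, ξ = lift h d}

lemma lift_add_sub_lift (h : (Fin n → ZMod 2) → (Fin n → ZMod 2)) (y a : Fin n → ZMod 2) :
    lift h (y + a) - lift h a = Psi y + 2 * Psi (h (y + a) + h a + y * a) := by
  rw [lift, lift, two_mul_Psi_add, two_mul_Psi_add]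
  linear_combination Psi_add_sub_Psi y a - two_mul_Psi_add_self (h a)

def IsQuadraticRep (h : (Fin n → ZMod 2) → (Fin n → ZMod 2)) : Prop :=
  ∀ x y z, h (x + y + z) + h (x + y) + h (x + z) + h (y + z) + h x + h y + h z = 0

lemma IsQuadraticRep.polar_add {h : (Fin n → ZMod 2) → (Fin n → ZMod 2)} (hq : IsQuadraticRep h)
    (a y z : Fin n → ZMod 2) :
    h (y + z + a) + h (y + z) + h a + (y + z) * a =
      (h (y + a) + h y + h a + y * a) + (h (z + a) + h z + h a + z * a) := by
  funext i
  have hi := congrFun (hq y z a) i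
  simp only [Pi.add_apply, Pi.mul_apply, Pi.zero_apply] at hi ⊢
  grind

def IsQuadraticRep.polar {h : (Fin n → ZMod 2) → (Fin n → ZMod 2)} (hq : IsQuadraticRep h)
    (a : Fin n → ZMod 2) : (Fin n → ZMod 2) →+ (Fin n → ZMod 2) :=
  AddMonoidHom.mk' (fun y => h (y + a) + h y + h a + y * a) (hq.polar_add a)

lemma IsQuadraticRep.shear_polar_lift_sub {h : (Fin n → ZMod 2) → (Fin n → ZMod 2)}
    (hq : IsQuadraticRep h) (a y : Fin n → ZMod 2) :
    shear (hq.polar a) (lift h (y + a) - lift h a) = lift h y := by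
  rw [lift_add_sub_lift, shear_apply_Psi_add]
  congr 3
  funext i
  simp only [IsQuadraticRep.polar, AddMonoidHom.mk'_apply, Pi.add_apply, Pi.mul_apply]
  grind

theorem IsQuadraticRep.exists_addAut_image_translate {h : (Fin n → ZMod 2) → (Fin n → ZMod 2)}
    (hq : IsQuadraticRep h) {g : Fin n → ZMod 4} (hg : -g ∈ setOfRep h) :
    ∃ γ : AddAut (Fin n → ZMod 4), ⇑γ '' ((fun d => d + g) '' setOfRep h) = setOfRep h := by
  obtain ⟨a, ha⟩ := hg
  have hg : g = -lift h a := by rw [← ha, neg_neg]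
  have key (y : Fin n → ZMod 2) : shear (hq.polar a) (lift h (y + a) + g) = lift h y := by
    rw [hg, ← sub_eq_add_neg, hq.shear_polar_lift_sub]
  refine ⟨shear (hq.polar a), ?_⟩
  ext ξ
  simp only [Set.image_image, setOfRep, Set.mem_image, Set.mem_ofPred_eq]
  constructor
  · rintro ⟨_, ⟨x, rfl⟩, rfl⟩
    exact ⟨x + a, by simpa only [add_add_self_right] using key (x + a)⟩
  · rintro ⟨y, rfl⟩
    exact ⟨lift h (y + a), ⟨y + a, rfl⟩, key y⟩

end

theorem stmt8_general (n : ℕ)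
    (h₂ : (Fin n → ZMod 2) → (Fin n → ZMod 2))
    (D₁ D₂ : Set (Fin n → ZMod 4))
    (hD₂ : D₂ = {ξ | ∃ d : Fin n → ZMod 2, ξ = Psi d + 2 * Psi (h₂ d)})
    (h0₁ : (0 : Fin n → ZMod 4) ∈ D₁)
    (hq₂ : ∀ x y z : Fin n → ZMod 2,
      h₂ (x + y + z) + h₂ (x + y) + h₂ (x + z) + h₂ (y + z) + h₂ x + h₂ y + h₂ z = 0)
    (α : AddAut (Fin n → ZMod 4)) (g : Fin n → ZMod 4)
    (hα : (⇑α) '' D₁ = (fun d => d + g) '' D₂) :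
    ∃ β : AddAut (Fin n → ZMod 4), (⇑β) '' D₁ = D₂ := by
  change D₂ = setOfRep h₂ at hD₂
  subst hD₂
  have hg : -g ∈ setOfRep h₂ := by
    obtain ⟨d, hd, hdg⟩ : (0 : Fin n → ZMod 4) ∈ (fun d => d + g) '' setOfRep h₂ :=
      hα ▸ ⟨0, h0₁, map_zero α⟩
    rwa [neg_eq_of_add_eq_zero_left hdg]
  obtain ⟨γ, hγ⟩ := IsQuadraticRep.exists_addAut_image_translate hq₂ hg
  exact ⟨α.trans γ, by rw [AddEquiv.coe_trans, Set.image_comp, hα, hγ]⟩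

/-- if two RDSs `D₁, D₂` containing 0, whose F₂ⁿ-representations
satisfy the commutative-semifield condition, are related by `α(D₁) = D₂ + g`
for an automorphism `α` of (ℤ/4)ⁿ and some `g`, then `β(D₁) = D₂` for some
automorphism `β` of (ℤ/4)ⁿ. -/
theorem stmt8 (n : ℕ) (hn : 0 < n)
    (h₁ h₂ : (Fin n → ZMod 2) → (Fin n → ZMod 2))
    (D₁ D₂ : Set (Fin n → ZMod 4))
    (hD₁ : D₁ = {ξ | ∃ d : Fin n → ZMod 2, ξ = Psi d + 2 * Psi (h₁ d)})
    (hD₂ : D₂ = {ξ | ∃ d : Fin n → ZMod 2, ξ = Psi d + 2 * Psi (h₂ d)})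
    (hRDS₁ : IsRDS n D₁) (hRDS₂ : IsRDS n D₂)
    (h0₁ : (0 : Fin n → ZMod 4) ∈ D₁) (h0₂ : (0 : Fin n → ZMod 4) ∈ D₂)
    (hq₁ : ∀ x y z : Fin n → ZMod 2,
      h₁ (x + y + z) + h₁ (x + y) + h₁ (x + z) + h₁ (y + z) + h₁ x + h₁ y + h₁ z = 0)
    (hq₂ : ∀ x y z : Fin n → ZMod 2,
      h₂ (x + y + z) + h₂ (x + y) + h₂ (x + z) + h₂ (y + z) + h₂ x + h₂ y + h₂ z = 0)
    (α : AddAut (Fin n → ZMod 4)) (g : Fin n → ZMod 4)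
    (hα : (⇑α) '' D₁ = (fun d => d + g) '' D₂) :
    ∃ β : AddAut (Fin n → ZMod 4), (⇑β) '' D₁ = D₂ :=
  stmt8_general n h₂ D₁ D₂ hD₂ h0₁ hq₂ α g hα
end

section
/- Let n be a positive integer and let f : F_{2^n} → F_{2^n} be a function with f(0) = 0 whose image is exactly {0, ξ} for some ξ ≠ 0. Then f is planar if and only if f is additive, i.e. f(x+y) = f(x) + f(y) for all x, y ∈ F_{2^n}. -/
/-!
If `f` takes only the values `0` and `ξ` and `b = ξ / a`, the planar map
`x ↦ f (x + a) + f x + a x` takes equal values at `x` and `x + b` as soon as the second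
difference `Δ_[a] Δ_[b] f (x)` equals `ξ`; so planarity forces `Δ_[a] Δ_[ξ / a] f = 0`.

From this, all iterated differences `Δ_[a₁] ⋯ Δ_[aₖ] Δ_[a] Δ_[c] f` vanish, by descending
induction on their order. Those of order `n + 1` vanish because their directions are linearly
dependent over `𝔽₂`. If all those of order `k + 1` vanish, one of order `k` is biadditive and
alternating in `(a, c)` and vanishes on the hyperbola `a c = ξ`. Such a form is zero: write it as
`∑ dᵢₖ a ^ 2 ^ k c ^ 2 ^ i`; after substituting `c = ξ / a` and clearing denominators, the
off-diagonal monomials have pairwise distinct exponents `2 ^ (n - 1) + 2 ^ k - 2 ^ i < 2 ^ n`, and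
the diagonal ones are killed by alternation. At order `2` this says that `f` is additive.
Conversely, for additive `f` the map `x ↦ f (x + a) + f x + a x = a x + f a` is a bijection.
-/

open Function

open fwdDiff Module Polynomial

theorem two_pow_add_two_pow_inj {a b c d : ℕ} (h : 2 ^ a + 2 ^ b = 2 ^ c + 2 ^ d) :
    a = c ∧ b = d ∨ a = d ∧ b = c := by
  wlog hab : a ≤ b generalizing a b
  · have := this (a := b) (b := a) ((add_comm _ _).trans h) (by omega)
    omega
  wlog hcd : c ≤ d generalizing c d
  · have := this (c := d) (d := c) (h.trans (add_comm _ _)) (by omega)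
    omega
  wlog hac : a ≤ c generalizing a b c d
  · have := this hcd h.symm hab (by omega)
    omega
  obtain ⟨b, rfl⟩ := Nat.exists_eq_add_of_le hab
  obtain ⟨c, rfl⟩ := Nat.exists_eq_add_of_le hac
  obtain ⟨d, rfl⟩ := Nat.exists_eq_add_of_le (hac.trans hcd)
  have h' : 1 + 2 ^ b = 2 ^ c + 2 ^ d := by
    simp only [pow_add] at h
    exact Nat.eq_of_mul_eq_mul_left (Nat.two_pow_pos a) (by linarith)
  rcases c with _ | c
  · left
    simp only [pow_zero, add_left_cancel_iff] at h'
    exact ⟨rfl, by rw [Nat.pow_right_injective le_rfl h']⟩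
  · obtain ⟨d, rfl⟩ : ∃ d', d = d' + 1 := ⟨d - 1, by omega⟩
    have := Nat.one_le_two_pow (n := c)
    have := Nat.one_le_two_pow (n := d)
    rcases b with _ | b <;> simp only [pow_succ, pow_zero] at h' <;> omega

section IterDiff

variable {V M : Type*} [AddCommGroup V] [AddCommGroup M]

def iterDiff (L : List V) (g : V → M) : V → M := L.foldr fwdDiff g

@[simp] lemma iterDiff_nil (g : V → M) : iterDiff [] g = g := rfl

@[simp] lemma iterDiff_cons (t : V) (L : List V) (g : V → M) :
    iterDiff (t :: L) g = Δ_[t] (iterDiff L g) := rfl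

lemma iterDiff_append (L L' : List V) (g : V → M) :
    iterDiff (L ++ L') g = iterDiff L (iterDiff L' g) :=
  List.foldr_append

lemma iterDiff_add (L : List V) (g h : V → M) :
    iterDiff L (g + h) = iterDiff L g + iterDiff L h := by
  induction L with
  | nil => rfl
  | cons t L ih => simp [ih]

@[simp] lemma fwdDiff_zero_right (a : V) : Δ_[a] (0 : V → M) = 0 :=
  fwdDiff_const a 0

@[simp] lemma iterDiff_zero (L : List V) : iterDiff L (0 : V → M) = 0 := by
  induction L with
  | nil => rfl
  | cons t L ih => rw [iterDiff_cons, ih, fwdDiff_zero_right]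

@[simp] lemma fwdDiff_zero_left (g : V → M) : Δ_[0] g = 0 := by
  ext x; simp [fwdDiff]

lemma fwdDiff_comm (a b : V) (g : V → M) : Δ_[a] (Δ_[b] g) = Δ_[b] (Δ_[a] g) := by
  ext x; simp only [fwdDiff, add_right_comm x a b]; abel

lemma fwdDiff_add_left (a b : V) (g : V → M) :
    Δ_[a + b] g = Δ_[a] g + Δ_[b] g + Δ_[a] (Δ_[b] g) := by
  ext x; simp only [fwdDiff, Pi.add_apply, ← add_assoc]; abel

lemma iterDiff_perm {L L' : List V} (h : L.Perm L') (g : V → M) :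
    iterDiff L g = iterDiff L' g := by
  induction h with
  | nil => rfl
  | cons t _ ih => simp [ih]
  | swap a b L => exact fwdDiff_comm b a _
  | trans _ _ ih₁ ih₂ => rw [ih₁, ih₂]

lemma iterDiff_append_pair_comm (L : List V) (a c : V) (g : V → M) :
    iterDiff (L ++ [a, c]) g = iterDiff (L ++ [c, a]) g :=
  iterDiff_perm (.append_left L (.swap c a [])) g

lemma iterDiff_append_pair_add_left (L : List V) (a a' c : V) (g : V → M) :
    iterDiff (L ++ [a + a', c]) g =
      iterDiff (L ++ [a, c]) g + iterDiff (L ++ [a', c]) g + iterDiff (L ++ [a, a', c]) g := by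
  simp only [iterDiff_append, iterDiff_cons, iterDiff_nil, fwdDiff_add_left, iterDiff_add]

variable [Module (ZMod 2) V] [Module (ZMod 2) M]

lemma fwdDiff_fwdDiff_self (a : V) (g : V → M) : Δ_[a] (Δ_[a] g) = 0 := by
  ext x
  have hx : x + a + a = x := by rw [add_assoc, ZModModule.add_self, add_zero]
  simp only [fwdDiff, hx, Pi.zero_apply]
  rw [← neg_sub (g x), sub_neg_eq_add, ZModModule.add_self]

lemma iterDiff_cons_eq_zero_of_mem (g : V → M) {L : List V} {s : V} (hs : s ∈ L) :
    iterDiff (s :: L) g = 0 := by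
  classical
  rw [iterDiff_perm (.cons s (List.perm_cons_erase hs)), iterDiff_cons, iterDiff_cons,
    fwdDiff_fwdDiff_self]

lemma iterDiff_cons_eq_zero_of_mem_span (g : V → M) {L : List V} {s : V}
    (hs : s ∈ Submodule.span (ZMod 2) {x | x ∈ L}) : iterDiff (s :: L) g = 0 := by
  induction hs using Submodule.span_induction with
  | mem s hs => exact iterDiff_cons_eq_zero_of_mem g hs
  | zero => simp
  | add s t _ _ hs ht =>
    simp only [iterDiff_cons] at hs ht ⊢
    rw [fwdDiff_add_left, hs, ht, fwdDiff_zero_right, add_zero, add_zero]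
  | smul c s _ hs =>
    rcases (by decide : ∀ c : ZMod 2, c = 0 ∨ c = 1) c with rfl | rfl
    · simp
    · rwa [one_smul]

lemma iterDiff_eq_zero_of_finrank_span_lt [FiniteDimensional (ZMod 2) V] (g : V → M) (L : List V)
    (hL : finrank (ZMod 2) (Submodule.span (ZMod 2) {x | x ∈ L}) < L.length) :
    iterDiff L g = 0 := by
  induction L with
  | nil => simp at hL
  | cons t L ih =>
    by_cases ht : t ∈ Submodule.span (ZMod 2) {x | x ∈ L}
    · exact iterDiff_cons_eq_zero_of_mem_span g ht
    · have hlt : Submodule.span (ZMod 2) {x | x ∈ L} <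
          Submodule.span (ZMod 2) {x | x ∈ t :: L} :=
        lt_of_le_of_ne (Submodule.span_mono fun x hx => List.mem_cons_of_mem t hx)
          fun h => ht (h ▸ Submodule.subset_span List.mem_cons_self)
      have := Submodule.finrank_lt_finrank_of_lt hlt
      rw [iterDiff_cons, ih (by simp at hL; omega), fwdDiff_zero_right]

lemma iterDiff_eq_zero_of_finrank_lt [FiniteDimensional (ZMod 2) V] (g : V → M) (L : List V)
    (hL : finrank (ZMod 2) V < L.length) : iterDiff L g = 0 :=
  iterDiff_eq_zero_of_finrank_span_lt g L ((Submodule.finrank_le _).trans_lt hL)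

end IterDiff

section CharTwo

variable {K : Type*} [Field K] [CharP K 2]

lemma add_mem_pair {ξ u v : K} (hu : u ∈ ({0, ξ} : Set K)) (hv : v ∈ ({0, ξ} : Set K)) :
    u + v ∈ ({0, ξ} : Set K) := by
  rcases hu with rfl | rfl <;> rcases hv with rfl | rfl <;> simp [CharTwo.add_self_eq_zero]

lemma isPlanar_of_map_add {f : K → K} (hf : ∀ x y, f (x + y) = f x + f y) : IsPlanar f := by
  intro a ha
  have : (fun x => f (x + a) + f x + a * x) = fun x => a * x + f a := by
    ext x
    rw [hf]
    linear_combination f x * (CharTwo.two_eq_zero : (2 : K) = 0)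
  rw [this]
  exact (Equiv.addRight (f a)).bijective.comp (mulLeft_bijective₀ a ha)

lemma IsPlanar.fwdDiff_fwdDiff_mul_inv_eq_zero {f : K → K} (hf : IsPlanar f) {ξ : K}
    (hrange : Set.range f ⊆ {0, ξ}) (a : K) : Δ_[a] (Δ_[ξ * a⁻¹] f) = 0 := by
  set b := ξ * a⁻¹
  rcases eq_or_ne b 0 with hb | hb
  · rw [hb, fwdDiff_zero_left, fwdDiff_zero_right]
  have ha : a ≠ 0 := by rintro rfl; simp [b] at hb
  have hab : a * b = ξ := by simp only [b]; field_simp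
  clear_value b
  ext x
  have hmem : ∀ y, f y ∈ ({0, ξ} : Set K) := fun y => hrange ⟨y, rfl⟩
  have hsum : Δ_[a] (Δ_[b] f) x = f (x + a + b) + f (x + a) + f (x + b) + f x := by
    simp only [fwdDiff, CharTwo.sub_eq_add, add_assoc]
  rcases (hsum ▸ add_mem_pair (add_mem_pair (add_mem_pair (hmem _) (hmem _)) (hmem _)) (hmem _) :
    Δ_[a] (Δ_[b] f) x ∈ ({0, ξ} : Set K)) with h | h
  · exact h
  -- a second difference equal to `ξ = a * b` makes the planar map collide on `x` and `x + b`
  have hcollide : f (x + b + a) + f (x + b) + a * (x + b) = f (x + a) + f x + a * x := by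
    rw [hsum, ← hab, Set.mem_singleton_iff] at h
    rw [add_right_comm x b a, mul_add]
    linear_combination h + (a * b - f (x + a) - f x) * (CharTwo.two_eq_zero : (2 : K) = 0)
  exact absurd (add_eq_left.mp ((hf a ha).injective (a₁ := x + b) (a₂ := x) hcollide)) hb

end CharTwo

section Linearized

variable {n : ℕ}
local notation "F" => GaloisField 2 n

lemma eq_zero_of_natDegree_lt_of_eval_eq_zero (hn : n ≠ 0) {p : F[X]} (hp : p.natDegree < 2 ^ n)
    (h : ∀ x, p.eval x = 0) : p = 0 :=
  eq_zero_of_forall_eval_zero_of_natDegree_lt_card p h <| by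
    rwa [← Nat.cast_card, GaloisField.card 2 n hn, Nat.cast_lt]

noncomputable def linearizedHom : (Fin n → F) →+ (F →+ F) :=
  AddMonoidHom.mk'
    (fun c => AddMonoidHom.mk' (fun x => ∑ i, c i * x ^ 2 ^ (i : ℕ)) fun x y => by
      simp only [add_pow_char_pow, mul_add, Finset.sum_add_distrib])
    fun c d => by ext x; simp [add_mul, Finset.sum_add_distrib]

@[simp] lemma linearizedHom_apply (c : Fin n → F) (x : F) :
    linearizedHom c x = ∑ i, c i * x ^ 2 ^ (i : ℕ) := rfl

lemma linearizedHom_injective (hn : n ≠ 0) : Injective (linearizedHom (n := n)) := by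
  rw [injective_iff_map_eq_zero]
  intro c hc
  set p : F[X] := ∑ i : Fin n, monomial (2 ^ (i : ℕ)) (c i)
  have hp : p = 0 := by
    refine eq_zero_of_natDegree_lt_of_eval_eq_zero hn ?_ fun x => ?_
    · refine (natDegree_sum_le_of_forall_le _ _ (n := 2 ^ (n - 1)) fun i _ =>
        (natDegree_monomial_le _).trans (Nat.pow_le_pow_right (by norm_num) (by omega))).trans_lt ?_
      exact Nat.pow_lt_pow_right (by norm_num) (by omega)
    · simpa [p, eval_finsetSum] using DFunLike.congr_fun hc x
  ext i
  simpa [p, finsetSum_coeff, coeff_monomial, Nat.pow_right_injective le_rfl |>.eq_iff,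
    Fin.val_inj] using congr_arg (coeff · (2 ^ (i : ℕ))) hp

lemma linearizedHom_bijective (hn : n ≠ 0) : Bijective (linearizedHom (n := n)) := by
  let φ := ((AddMonoidHom.toZModLinearMapEquiv 2).toAddMonoidHom.comp
    (linearizedHom (n := n))).toZModLinearMap 2
  have hφ : Injective φ :=
    (AddMonoidHom.toZModLinearMapEquiv 2).injective.comp (linearizedHom_injective hn)
  have hdim : finrank (ZMod 2) (Fin n → F) = finrank (ZMod 2) (F →ₗ[ZMod 2] F) := by
    simp [finrank_linearMap, finrank_pi_fintype, GaloisField.finrank 2 hn]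
  refine ⟨linearizedHom_injective hn, fun L => ?_⟩
  obtain ⟨c, hc⟩ := (LinearMap.injective_iff_surjective_of_finrank_eq_finrank hdim).mp hφ
    (L.toZModLinearMap 2)
  exact ⟨c, (AddMonoidHom.toZModLinearMapEquiv 2).injective hc⟩

noncomputable def linearizedEquiv (hn : n ≠ 0) : (Fin n → F) ≃+ (F →+ F) :=
  AddEquiv.ofBijective linearizedHom (linearizedHom_bijective hn)

@[simp] lemma linearizedEquiv_apply (hn : n ≠ 0) (c : Fin n → F) :
    linearizedEquiv hn c = linearizedHom c := rfl

lemma exists_coeff_expansion (hn : n ≠ 0) (B : F →+ F →+ F) :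
    ∃ d : Fin n → Fin n → F, ∀ x y,
      B x y = ∑ i, (∑ k, d i k * x ^ 2 ^ (k : ℕ)) * y ^ 2 ^ (i : ℕ) := by
  let e := linearizedEquiv hn
  let c : F →+ (Fin n → F) := e.symm.toAddMonoidHom.comp B
  have hc : ∀ x y, B x y = ∑ i, c x i * y ^ 2 ^ (i : ℕ) := fun x y => by
    rw [← linearizedHom_apply, ← linearizedEquiv_apply hn]
    simp [c, e]
  refine ⟨fun i => e.symm ((Pi.evalAddMonoidHom (fun _ => F) i).comp c), fun x y => ?_⟩
  simp_rw [hc, ← linearizedHom_apply, ← linearizedEquiv_apply hn, e, AddEquiv.apply_symm_apply]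
  rfl

lemma offDiag_coeff_eq_zero_of_hyperbola (hn : n ≠ 0) {ξ : F} (hξ : ξ ≠ 0)
    (d : Fin n → Fin n → F)
    (h : ∀ x : F, ∑ i, (∑ k, d i k * x ^ 2 ^ (k : ℕ)) * (ξ * x⁻¹) ^ 2 ^ (i : ℕ) = 0)
    {i k : Fin n} (hik : i ≠ k) : d i k = 0 := by
  have hle : ∀ j : Fin n, 2 ^ (j : ℕ) ≤ 2 ^ (n - 1) := fun j =>
    Nat.pow_le_pow_right (by norm_num) (by omega)
  have hpos : ∀ j : ℕ, 1 ≤ 2 ^ j := fun j => Nat.one_le_two_pow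
  have hn' : 2 ^ n = 2 * 2 ^ (n - 1) := by rw [← pow_succ', Nat.sub_add_cancel (by omega)]
  -- multiplying by `x ^ 2 ^ (n - 1)` clears the denominators
  let e : Fin n × Fin n → ℕ := fun p => 2 ^ (n - 1) + 2 ^ (p.2 : ℕ) - 2 ^ (p.1 : ℕ)
  have he_le : ∀ p, e p ≤ 2 ^ n - 1 := fun p => by
    have := hle p.2
    have := hpos p.1
    dsimp only [e]
    omega
  have he : ∀ p, e p = e (i, k) → p = (i, k) := by
    intro p hp
    have := hle p.1
    have := hle i
    have hsum : 2 ^ (p.2 : ℕ) + 2 ^ (i : ℕ) = 2 ^ (k : ℕ) + 2 ^ (p.1 : ℕ) := by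
      dsimp only [e] at hp
      generalize 2 ^ (n - 1) = N, 2 ^ (p.1 : ℕ) = A, 2 ^ (p.2 : ℕ) = A',
        2 ^ (i : ℕ) = B, 2 ^ (k : ℕ) = B' at *
      omega
    rcases two_pow_add_two_pow_inj hsum with ⟨h₁, h₂⟩ | ⟨-, h₂⟩
    · exact Prod.ext (Fin.ext h₂.symm) (Fin.ext h₁)
    · exact absurd (Fin.ext h₂) hik
  set P : F[X] := ∑ p, monomial (e p) (d p.1 p.2 * ξ ^ 2 ^ (p.1 : ℕ))
  have hP : P = 0 := by
    refine eq_zero_of_natDegree_lt_of_eval_eq_zero hn ?_ fun x => ?_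
    · have := hpos n
      exact (natDegree_sum_le_of_forall_le _ _ fun p _ =>
        (natDegree_monomial_le _).trans (he_le p)).trans_lt (by omega)
    · calc P.eval x = x ^ 2 ^ (n - 1) *
            ∑ i, (∑ k, d i k * x ^ 2 ^ (k : ℕ)) * (ξ * x⁻¹) ^ 2 ^ (i : ℕ) := by
            simp only [P, eval_finsetSum, eval_monomial, Fintype.sum_prod_type, Finset.mul_sum,
              Finset.sum_mul]
            refine Finset.sum_congr rfl fun i _ => Finset.sum_congr rfl fun k _ => ?_
            have hlt : 2 ^ (i : ℕ) < 2 ^ (n - 1) + 2 ^ (k : ℕ) := by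
              have := hle i; have := hpos k; omega
            rw [pow_sub_of_lt x hlt, pow_add, mul_pow, inv_pow]
            ring
        _ = 0 := by rw [h, mul_zero]
  have hcoeff := congr_arg (coeff · (e (i, k))) hP
  simp only [P, finsetSum_coeff, coeff_monomial, coeff_zero] at hcoeff
  rw [Finset.sum_eq_single (i, k) (fun p _ hp => if_neg fun h => hp (he p h)) (by simp),
    if_pos rfl] at hcoeff
  exact (mul_eq_zero.mp hcoeff).resolve_right (pow_ne_zero _ hξ)

lemma diag_coeff_eq_zero_of_alternating (hn : n ≠ 0) (d : Fin n → Fin n → F)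
    (hoff : ∀ i k, i ≠ k → d i k = 0)
    (h : ∀ x : F, ∑ i, (∑ k, d i k * x ^ 2 ^ (k : ℕ)) * x ^ 2 ^ (i : ℕ) = 0) (i : Fin n) :
    d i i = 0 := by
  have hdiag : linearizedHom (fun i => d i i) = 0 := by
    ext z
    obtain ⟨x, rfl⟩ := surjective_frobenius F 2 z
    rw [AddMonoidHom.zero_apply, ← h x, linearizedHom_apply, frobenius_def]
    refine Finset.sum_congr rfl fun i _ => ?_
    rw [Finset.sum_eq_single i (fun k _ hk => by rw [hoff i k hk.symm, zero_mul]) (by simp)]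
    ring
  exact congr_fun ((injective_iff_map_eq_zero _).mp (linearizedHom_injective hn) _ hdiag) i

theorem biadditive_eq_zero_of_alternating_of_hyperbola (hn : n ≠ 0) {ξ : F} (hξ : ξ ≠ 0)
    (B : F →+ F →+ F) (halt : ∀ x, B x x = 0) (hB : ∀ x, B x (ξ * x⁻¹) = 0) :
    B = 0 := by
  obtain ⟨d, hd⟩ := exists_coeff_expansion hn B
  have hoff : ∀ i k, i ≠ k → d i k = 0 := fun i k =>
    offDiag_coeff_eq_zero_of_hyperbola hn hξ d fun x => (hd _ _).symm.trans (hB x)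
  have hdiag := diag_coeff_eq_zero_of_alternating hn d hoff fun x => (hd x x).symm.trans (halt x)
  have hzero : ∀ i k, d i k = 0 := fun i k => by
    obtain rfl | hik := eq_or_ne i k
    exacts [hdiag i, hoff i k hik]
  ext x y
  simp [hd, hzero]

end Linearized

section Descent

variable {n : ℕ} {f : GaloisField 2 n → GaloisField 2 n} {ξ : GaloisField 2 n}

lemma iterDiff_append_pair_eq_zero_of_succ (hn : n ≠ 0) (hξ : ξ ≠ 0)
    (hseed : ∀ a, Δ_[a] (Δ_[ξ * a⁻¹] f) = 0) (L : List (GaloisField 2 n))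
    (hL : ∀ L' : List (GaloisField 2 n), L'.length = L.length + 1 →
      ∀ a c, iterDiff (L' ++ [a, c]) f = 0)
    (a c : GaloisField 2 n) : iterDiff (L ++ [a, c]) f = 0 := by
  ext x
  let D a c := iterDiff (L ++ [a, c]) f x
  have hadd : ∀ a a' c, D (a + a') c = D a c + D a' c := by
    intro a a' c
    have := hL (L ++ [a]) (by simp) a' c
    simp only [List.append_assoc, List.cons_append, List.nil_append] at this
    simp [D, iterDiff_append_pair_add_left, this]
  have hsymm : ∀ a c, D a c = D c a := fun a c => congr_fun (iterDiff_append_pair_comm L a c f) x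
  let B : GaloisField 2 n →+ GaloisField 2 n →+ GaloisField 2 n :=
    AddMonoidHom.mk' (fun a => AddMonoidHom.mk' (D a) fun c c' => by
      rw [hsymm, hadd, hsymm c, hsymm c']) fun a a' => AddMonoidHom.ext (hadd a a')
  have hB : B = 0 := biadditive_eq_zero_of_alternating_of_hyperbola hn hξ B
    (fun a => by simp [B, D, iterDiff_append, fwdDiff_fwdDiff_self])
    (fun a => by simp [B, D, iterDiff_append, hseed])
  exact DFunLike.congr_fun (DFunLike.congr_fun hB a) c

lemma fwdDiff_fwdDiff_eq_zero_of_hyperbola (hn : n ≠ 0) (hξ : ξ ≠ 0)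
    (hseed : ∀ a, Δ_[a] (Δ_[ξ * a⁻¹] f) = 0) (a c : GaloisField 2 n) :
    Δ_[a] (Δ_[c] f) = 0 := by
  have key : ∀ j (L : List (GaloisField 2 n)), L.length + j = n - 1 →
      ∀ a c, iterDiff (L ++ [a, c]) f = 0 := by
    intro j
    induction j with
    | zero =>
      intro L hL a c
      exact iterDiff_eq_zero_of_finrank_lt f _ (by simp [GaloisField.finrank 2 hn]; omega)
    | succ j ih =>
      intro L hL
      exact iterDiff_append_pair_eq_zero_of_succ hn hξ hseed L fun L' hL' => ih L' (by omega)
  simpa using key (n - 1) [] (by simp) a c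

end Descent

/-- a function `f` on F_{2ⁿ} with `f(0) = 0` and image exactly
`{0, ξ}` for some `ξ ≠ 0` is planar iff it is additive. -/
theorem stmt10 (n : ℕ) (hn : 0 < n) (f : GaloisField 2 n → GaloisField 2 n)
    (hf0 : f 0 = 0) (ξ : GaloisField 2 n) (hξ : ξ ≠ 0)
    (him : Set.range f = {0, ξ}) :
    IsPlanar f ↔ ∀ x y : GaloisField 2 n, f (x + y) = f x + f y := by
  refine ⟨fun hf x y => ?_, isPlanar_of_map_add⟩
  have h := congr_fun (fwdDiff_fwdDiff_eq_zero_of_hyperbola hn.ne' hξ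
    (hf.fwdDiff_fwdDiff_mul_inv_eq_zero him.subset) x y) 0
  simp only [fwdDiff, zero_add, hf0, sub_zero, Pi.zero_apply] at h
  linear_combination h
end

section
/- Let f : F_{2^n} → F_{2^n} be a function whose image is exactly {0, ξ} for some ξ ≠ 0. Then f is planar if and only if for every a ≠ 0 and every x ∈ F_{2^n}, f(x+a) + f(x) + f(x + a + ξ/a) + f(x + ξ/a) = 0. -/
/-!
In characteristic 2, writing `g x = f (x + a) + f x + a * x`, one has
`g (x + c) + g x = Δ + a * c` with `Δ = f (x + a) + f x + f (x + a + c) + f (x + c)`.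
When `f` takes only the values `0` and `ξ`, so does `Δ`; hence a collision `g (x + c) = g x`
with `c ≠ 0` forces `a * c = ξ`, i.e. `c = ξ / a`, and it happens exactly when the second
difference `Δ` at `c = ξ / a` equals `ξ` rather than `0`.
-/

open Function

namespace CharTwo

lemma add_mem_insert_zero_singleton {R : Type*} [Ring R] [CharP R 2] {ξ u v : R}
    (hu : u ∈ ({0, ξ} : Set R)) (hv : v ∈ ({0, ξ} : Set R)) : u + v ∈ ({0, ξ} : Set R) := by
  rcases hu with rfl | rfl <;> rcases hv with rfl | rfl <;> simp [add_self_eq_zero]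

variable {F : Type*} [Field F] [CharP F 2]

lemma planarMap_add_add_planarMap (f : F → F) (a x c : F) :
    (f (x + c + a) + f (x + c) + a * (x + c)) + (f (x + a) + f x + a * x) =
      f (x + a) + f x + f (x + a + c) + f (x + c) + a * c := by
  rw [add_right_comm x c a]
  linear_combination (a * x) * two_eq_zero (R := F)

variable {f : F → F} {ξ : F}

lemma secondDifference_mem (hf : ∀ x, f x ∈ ({0, ξ} : Set F)) (a x c : F) :
    f (x + a) + f x + f (x + a + c) + f (x + c) ∈ ({0, ξ} : Set F) :=
  add_mem_insert_zero_singleton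
    (add_mem_insert_zero_singleton (add_mem_insert_zero_singleton (hf _) (hf _)) (hf _)) (hf _)

lemma injective_planarMap_iff (hf : ∀ x, f x ∈ ({0, ξ} : Set F)) (hξ : ξ ≠ 0) {a : F}
    (ha : a ≠ 0) :
    Injective (fun x => f (x + a) + f x + a * x) ↔
      ∀ x, f (x + a) + f x + f (x + a + ξ / a) + f (x + ξ / a) = 0 := by
  constructor
  · intro hinj x
    refine (secondDifference_mem hf a x (ξ / a)).resolve_right fun hΔ => ?_
    have hcollide := planarMap_add_add_planarMap f a x (ξ / a)
    rw [hΔ, mul_div_cancel₀ ξ ha, add_self_eq_zero, CharTwo.add_eq_zero] at hcollide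
    exact div_ne_zero hξ ha (add_eq_left.mp (hinj hcollide))
  · intro hcond x y (hxy : f (x + a) + f x + a * x = f (y + a) + f y + a * y)
    obtain ⟨c, rfl⟩ : ∃ c, y = x + c := ⟨y - x, by abel⟩
    have hΔ := planarMap_add_add_planarMap f a x c
    rw [← hxy, add_self_eq_zero, eq_comm, CharTwo.add_eq_zero] at hΔ
    rcases secondDifference_mem hf a x c with h0 | hξ'
    · rw [h0, eq_comm, mul_eq_zero] at hΔ
      rw [hΔ.resolve_left ha, add_zero]
    · have hc : c = ξ / a := by rw [eq_div_iff ha, mul_comm, ← hΔ, hξ']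
      rw [hc, hcond x] at hξ'
      exact absurd hξ'.symm hξ

lemma isPlanar_iff [Finite F] (hf : ∀ x, f x ∈ ({0, ξ} : Set F)) (hξ : ξ ≠ 0) :
    IsPlanar f ↔
      ∀ a : F, a ≠ 0 → ∀ x, f (x + a) + f x + f (x + a + ξ / a) + f (x + ξ / a) = 0 :=
  forall₂_congr fun _ ha => Finite.injective_iff_bijective.symm.trans
    (injective_planarMap_iff hf hξ ha)

end CharTwo

theorem stmt11_general (n : ℕ) (f : GaloisField 2 n → GaloisField 2 n)
    (ξ : GaloisField 2 n) (hξ : ξ ≠ 0) (him : Set.range f = {0, ξ}) :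
    IsPlanar f ↔
    ∀ a : GaloisField 2 n, a ≠ 0 → ∀ x : GaloisField 2 n,
      f (x + a) + f x + f (x + a + ξ / a) + f (x + ξ / a) = 0 :=
  CharTwo.isPlanar_iff (fun x => him ▸ Set.mem_range_self x) hξ

/-- a function `f` on F_{2ⁿ} with image exactly `{0, ξ}`, `ξ ≠ 0`,
is planar iff `f(x+a) + f(x) + f(x+a+ξ/a) + f(x+ξ/a) = 0` for all `a ≠ 0`, `x`. -/
theorem stmt11 (n : ℕ) (hn : 0 < n) (f : GaloisField 2 n → GaloisField 2 n)
    (ξ : GaloisField 2 n) (hξ : ξ ≠ 0) (him : Set.range f = {0, ξ}) :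
    IsPlanar f ↔
    ∀ a : GaloisField 2 n, a ≠ 0 → ∀ x : GaloisField 2 n,
      f (x + a) + f x + f (x + a + ξ / a) + f (x + ξ / a) = 0 :=
  stmt11_general n f ξ hξ him
end

section
/- Let ξ ∈ F_{2^n} be nonzero and let a ∈ F_{2^n} with a ≠ 0 and a² ≠ ξ. Define the sequence (a_i)_{i≥0} by a_0 := a, a_1 := a + ξ/a, and a_{i+1} := a_{i−1} + ξ/a_i for i ≥ 1 (with the convention x/0 := 0). Then a_i ≠ 0 for all i, and for all i ≥ 0: a_{2i} = a·(a²/(a²+ξ))^i and a_{2i+1} = a·((a²+ξ)/a²)^{i+1}. -/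
/-!
Put `r = (a² + ξ) / a²`; the sequence alternates between `a r⁻ⁱ` and `a rⁱ⁺¹`. The odd step
`a rⁱ⁺¹ + ξ rⁱ⁺¹ / a = a rⁱ⁺²` holds in any field. The even step
`a r⁻ⁱ + ξ / (a rⁱ⁺¹) = r⁻ⁱ · a (a² + 2ξ) / (a² + ξ)` needs `2ξ = 0`, i.e. characteristic two,
which also turns `a² ≠ ξ` into `a² + ξ ≠ 0`, so that every term is a nonzero multiple of `a`.
-/

section CharTwo

variable {F : Type*} [Field F] {a ξ : F}

theorem sq_add_ne_zero_of_sq_ne [CharP F 2] (h : a ^ 2 ≠ ξ) : a ^ 2 + ξ ≠ 0 :=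
  fun h' => h (CharTwo.add_eq_zero.mp h')

theorem even_step_closedForm [CharP F 2] (ha : a ≠ 0) (haξ : a ^ 2 + ξ ≠ 0) (i : ℕ) :
    a * (a ^ 2 / (a ^ 2 + ξ)) ^ i + ξ / (a * ((a ^ 2 + ξ) / a ^ 2) ^ (i + 1)) =
      a * (a ^ 2 / (a ^ 2 + ξ)) ^ (i + 1) := by
  have h2 : (2 : F) = 0 := CharTwo.two_eq_zero
  simp only [div_pow]
  field_simp [haξ]
  linear_combination (a ^ 2 * a ^ (2 * i) * ξ * (a ^ 2 + ξ) ^ i) * h2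

theorem odd_step_closedForm (ha : a ≠ 0) (i : ℕ) :
    a * ((a ^ 2 + ξ) / a ^ 2) ^ (i + 1) + ξ / (a * (a ^ 2 / (a ^ 2 + ξ)) ^ (i + 1)) =
      a * ((a ^ 2 + ξ) / a ^ 2) ^ (i + 2) := by
  simp only [div_pow]
  field_simp
  ring

theorem closedForm_of_recursion [CharP F 2] (ha : a ≠ 0) (haξ : a ^ 2 + ξ ≠ 0) {s : ℕ → F}
    (hs0 : s 0 = a) (hs1 : s 1 = a + ξ / a) (hrec : ∀ i, s (i + 2) = s i + ξ / s (i + 1))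
    (i : ℕ) :
    s (2 * i) = a * (a ^ 2 / (a ^ 2 + ξ)) ^ i ∧
      s (2 * i + 1) = a * ((a ^ 2 + ξ) / a ^ 2) ^ (i + 1) := by
  induction i with
  | zero =>
    refine ⟨by simpa using hs0, ?_⟩
    rw [hs1, zero_add, pow_one]
    field_simp
  | succ i ih =>
    have h_even : s (2 * (i + 1)) = a * (a ^ 2 / (a ^ 2 + ξ)) ^ (i + 1) := by
      rw [← even_step_closedForm ha haξ, ← ih.1, ← ih.2]
      exact hrec (2 * i)
    refine ⟨h_even, ?_⟩
    rw [← odd_step_closedForm ha, ← ih.2, ← h_even]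
    exact hrec (2 * i + 1)

end CharTwo

theorem stmt13_general (n : ℕ) (ξ a : GaloisField 2 n)
    (ha : a ≠ 0) (ha2 : a ^ 2 ≠ ξ)
    (s : ℕ → GaloisField 2 n)
    (hs0 : s 0 = a) (hs1 : s 1 = a + ξ / a)
    (hrec : ∀ i : ℕ, s (i + 2) = s i + ξ / s (i + 1)) :
    (∀ i, s i ≠ 0) ∧
    (∀ i : ℕ, s (2 * i) = a * (a ^ 2 / (a ^ 2 + ξ)) ^ i ∧
      s (2 * i + 1) = a * ((a ^ 2 + ξ) / a ^ 2) ^ (i + 1)) := by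
  have haξ := sq_add_ne_zero_of_sq_ne ha2
  have hclosed := closedForm_of_recursion ha haξ hs0 hs1 hrec
  refine ⟨fun i => ?_, hclosed⟩
  obtain ⟨k, rfl | rfl⟩ := Nat.even_or_odd' i
  · rw [(hclosed k).1]
    exact mul_ne_zero ha (pow_ne_zero _ (div_ne_zero (pow_ne_zero _ ha) haξ))
  · rw [(hclosed k).2]
    exact mul_ne_zero ha (pow_ne_zero _ (div_ne_zero haξ (pow_ne_zero _ ha)))

/-- for `ξ ≠ 0` and `a ≠ 0` with `a² ≠ ξ`, the sequence
`a₀ = a`, `a₁ = a + ξ/a`, `a_{i+1} = a_{i−1} + ξ/a_i` (with `x/0 = 0`)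
has all terms nonzero, and `a_{2i} = a·(a²/(a²+ξ))^i`,
`a_{2i+1} = a·((a²+ξ)/a²)^{i+1}`. -/
theorem stmt13 (n : ℕ) (hn : 0 < n) (ξ a : GaloisField 2 n)
    (hξ : ξ ≠ 0) (ha : a ≠ 0) (ha2 : a ^ 2 ≠ ξ)
    (s : ℕ → GaloisField 2 n)
    (hs0 : s 0 = a) (hs1 : s 1 = a + ξ / a)
    (hrec : ∀ i : ℕ, s (i + 2) = s i + ξ / s (i + 1)) :
    (∀ i, s i ≠ 0) ∧
    (∀ i : ℕ, s (2 * i) = a * (a ^ 2 / (a ^ 2 + ξ)) ^ i ∧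
      s (2 * i + 1) = a * ((a ^ 2 + ξ) / a ^ 2) ^ (i + 1)) :=
  stmt13_general n ξ a ha ha2 s hs0 hs1 hrec
end

section
/- Let ξ ∈ F_{2^n} be nonzero and let a ∈ F_{2^n} with a ≠ 0 and a² ≠ ξ. Define the sequence (a_i)_{i≥0} by a_0 := a, a_1 := a + ξ/a, and a_{i+1} := a_{i−1} + ξ/a_i for i ≥ 1 (with the convention x/0 := 0). Then the sequence (a_i) is periodic, and its least period equals 2·ord(1 + ξ/a²), where ord denotes the multiplicative order in F_{2^n}^×. -/
/-!
Put `β = 1 + ξ/a²`, so that `a²β = a² + ξ`. In characteristic 2 one checks by induction that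
`a_{2k} = a/βᵏ` and `a_{2k+1} = aβ^{k+1}`. Since the recurrence is of second order, `p` is a
period iff `a_p = a_0` and `a_{p+1} = a_1`. For `p = 2m` both conditions say `βᵐ = 1`; for odd `p`
they force `β = 1`, i.e. `ξ = 0`. Hence the periods are exactly the multiples of `2·ord β`.
-/

theorem Function.periodic_iff_of_two_step_rec {α : Type*} {f : α → α → α} {s : ℕ → α} {p : ℕ}
    (hrec : ∀ i, s (i + 2) = f (s i) (s (i + 1))) :
    Function.Periodic s p ↔ s p = s 0 ∧ s (p + 1) = s 1 := by
  refine ⟨fun h ↦ ⟨by simpa using h 0, by simpa [add_comm] using h 1⟩, fun ⟨h0, h1⟩ ↦ ?_⟩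
  suffices ∀ i, s (i + p) = s i ∧ s (i + 1 + p) = s (i + 1) from fun i ↦ (this i).1
  intro i
  induction i with
  | zero => simpa [add_comm] using ⟨h0, h1⟩
  | succ i ih =>
    refine ⟨ih.2, ?_⟩
    calc s (i + 1 + 1 + p) = f (s (i + p)) (s (i + 1 + p)) := by
          rw [show i + 1 + 1 + p = i + p + 2 by ring, hrec, add_right_comm]
      _ = s (i + 1 + 1) := by rw [ih.1, ih.2, ← hrec]

theorem sq_mul_one_add_div_sq {K : Type*} [Field K] {ξ a : K} (ha : a ≠ 0) :
    a ^ 2 * (1 + ξ / a ^ 2) = a ^ 2 + ξ := by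
  field_simp

section CharTwo

variable {K : Type*} [Field K] [CharP K 2] {ξ a β : K} {s : ℕ → K}

theorem closed_form_of_rec (ha : a ≠ 0) (hβ0 : β ≠ 0) (hβ : a ^ 2 * β = a ^ 2 + ξ)
    (hs0 : s 0 = a) (hs1 : s 1 = a + ξ / a) (hrec : ∀ i, s (i + 2) = s i + ξ / s (i + 1)) (k : ℕ) :
    s (2 * k) = a / β ^ k ∧ s (2 * k + 1) = a * β ^ (k + 1) := by
  induction k with
  | zero =>
    refine ⟨by simpa using hs0, ?_⟩
    rw [hs1, zero_add, pow_one]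
    field_simp
    linear_combination -hβ
  | succ k ih =>
    have heven : s (2 * (k + 1)) = a / β ^ (k + 1) := by
      rw [show 2 * (k + 1) = 2 * k + 2 by ring, hrec, ih.1, ih.2]
      field_simp
      linear_combination β ^ k * hβ + ξ * β ^ k * CharTwo.add_self_eq_zero (1 : K)
    refine ⟨heven, ?_⟩
    rw [show 2 * (k + 1) + 1 = 2 * k + 1 + 2 by ring, hrec, ih.2, show 2 * k + 1 + 1 = 2 * (k + 1)
      by ring, heven]
    field_simp
    linear_combination -(β * β ^ k) * hβ

theorem periodic_iff_two_mul_orderOf_dvd (ha : a ≠ 0) (hξ : ξ ≠ 0) (ha2 : a ^ 2 ≠ ξ)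
    (hβ : a ^ 2 * β = a ^ 2 + ξ) (hs0 : s 0 = a) (hs1 : s 1 = a + ξ / a)
    (hrec : ∀ i, s (i + 2) = s i + ξ / s (i + 1)) {p : ℕ} :
    Function.Periodic s p ↔ 2 * orderOf β ∣ p := by
  have hβ0 : β ≠ 0 := fun h ↦ ha2 <| CharTwo.add_eq_zero.1 (by rw [← hβ, h, mul_zero])
  have hβ1 : β ≠ 1 := fun h ↦ hξ <| by simpa [h] using hβ
  have hs := closed_form_of_rec ha hβ0 hβ hs0 hs1 hrec
  rw [Function.periodic_iff_of_two_step_rec (f := fun x y ↦ x + ξ / y) hrec, hs0,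
    (by simpa using (hs 0).2 : s 1 = a * β)]
  obtain ⟨m, rfl | rfl⟩ := Nat.even_or_odd' p
  · rw [(hs m).1, (hs m).2, Nat.mul_dvd_mul_iff_left two_pos, orderOf_dvd_iff_pow_eq_one,
      div_eq_iff (pow_ne_zero _ hβ0), eq_comm, mul_eq_left₀ ha, pow_succ, mul_right_inj' ha,
      mul_eq_right₀ hβ0, and_self]
  · refine iff_of_false (fun ⟨h0, h1⟩ ↦ hβ1 ?_) fun h ↦ Nat.not_even_two_mul_add_one m <|
      even_iff_two_dvd.2 <| (dvd_mul_right 2 _).trans h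
    rw [(hs m).2, mul_eq_left₀ ha] at h0
    rwa [show 2 * m + 1 + 1 = 2 * (m + 1) by ring, (hs (m + 1)).1, h0, div_one, eq_comm,
      mul_eq_left₀ ha] at h1

end CharTwo

theorem stmt14_general (n : ℕ) (ξ a : GaloisField 2 n)
    (hξ : ξ ≠ 0) (ha : a ≠ 0) (ha2 : a ^ 2 ≠ ξ)
    (s : ℕ → GaloisField 2 n)
    (hs0 : s 0 = a) (hs1 : s 1 = a + ξ / a)
    (hrec : ∀ i : ℕ, s (i + 2) = s i + ξ / s (i + 1)) :
    Function.Periodic s (2 * orderOf (1 + ξ / a ^ 2)) ∧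
    (∀ p : ℕ, 0 < p → Function.Periodic s p →
      2 * orderOf (1 + ξ / a ^ 2) ≤ p) := by
  have hperiod {p : ℕ} := periodic_iff_two_mul_orderOf_dvd (p := p) ha hξ ha2
    (sq_mul_one_add_div_sq ha) hs0 hs1 hrec
  exact ⟨hperiod.2 dvd_rfl, fun p hp h ↦ Nat.le_of_dvd hp (hperiod.1 h)⟩

/-- for `ξ ≠ 0` and `a ≠ 0` with `a² ≠ ξ`, the sequence
`a₀ = a`, `a₁ = a + ξ/a`, `a_{i+1} = a_{i−1} + ξ/a_i` (with `x/0 = 0`) is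
periodic with least period `2·ord(1 + ξ/a²)`, where `ord` is the multiplicative
order in F_{2ⁿ}. -/
theorem stmt14 (n : ℕ) (hn : 0 < n) (ξ a : GaloisField 2 n)
    (hξ : ξ ≠ 0) (ha : a ≠ 0) (ha2 : a ^ 2 ≠ ξ)
    (s : ℕ → GaloisField 2 n)
    (hs0 : s 0 = a) (hs1 : s 1 = a + ξ / a)
    (hrec : ∀ i : ℕ, s (i + 2) = s i + ξ / s (i + 1)) :
    Function.Periodic s (2 * orderOf (1 + ξ / a ^ 2)) ∧
    (∀ p : ℕ, 0 < p → Function.Periodic s p →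
      2 * orderOf (1 + ξ / a ^ 2) ≤ p) :=
  stmt14_general n ξ a hξ ha ha2 s hs0 hs1 hrec
end

section
/- Let f : F_{2^n} → F_{2^n} be a function with f(0) = 0 and let ξ ∈ F_{2^n} be nonzero. Let P_n := {1/(1+α) : α is a primitive element of F_{2^n}} ∪ {1}, and assume that P_n spans F_{2^n} as a vector space over F_2. Then {(a, ξ/a) : a ∈ F_{2^n}} ⊆ A_f (with the convention ξ/0 := 0) if and only if f is additive, i.e. f(x+y) = f(x) + f(y) for all x, y. -/
/-- `A_f = {(a,b) : f(x+a) + f(x) + f(x+a+b) + f(x+b) = 0 for all x}`. -/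
def Af {F : Type*} [Field F] (f : F → F) : Set (F × F) :=
  {p | ∀ x, f (x + p.1) + f x + f (x + p.1 + p.2) + f (x + p.2) = 0}

/-!
Write `R a = {b | (a, b) ∈ A_f}`. In characteristic 2 each `R a` is an additive subgroup, the
relation is symmetric, and `a ∈ R a`. Suppose `ξ / a ∈ R a` for all `a`. Adding `ξ / (aα)` and using
`1 / (α(1 + α)) + 1 / α = 1 / (1 + α)`, then swapping and adding `a(1 + α) = ξ / (ξ / (a(1 + α)))`,
shows that `ξ / (aα(1 + α)) ∈ R (aα)` implies `ξ / (a(1 + α)) ∈ R a`. For primitive `α`, some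
`aαᵏ` squares to `ξ / (1 + α)`, which makes the membership at `aαᵏ` diagonal; descending `k` times
gives `(ξ / a) · 1 / (1 + α) ∈ R a`. So `R a` contains `(ξ / a) P_n`, hence is everything when
`P_n` spans, and `(y, x) ∈ A_f` evaluated at `0` is additivity.
-/

namespace Af

variable {F : Type*} [Field F] {f : F → F} {a b ξ α : F}

theorem swap_mem (h : (a, b) ∈ Af f) : (b, a) ∈ Af f := fun x => by
  rw [add_right_comm x b a]
  linear_combination h x

variable [CharP F 2]

theorem mk_self_mem (a : F) : (a, a) ∈ Af f := fun x => by
  simp [add_assoc, CharTwo.add_self_eq_zero]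

variable (f) in
def row (a : F) : AddSubgroup F where
  carrier := {b | (a, b) ∈ Af f}
  zero_mem' x := by
    simp only [add_zero]
    linear_combination CharTwo.add_self_eq_zero (f (x + a)) + CharTwo.add_self_eq_zero (f x)
  add_mem' {b b'} hb hb' x := by
    have h₁ : f (x + a) + f x + f (x + a + b) + f (x + b) = 0 := hb x
    have h₂ : f (x + a + b) + f (x + b) + f (x + a + (b + b')) + f (x + (b + b')) = 0 := by
      simpa only [add_right_comm x b a, add_assoc] using hb' (x + b)
    linear_combination h₁ + h₂ - (CharTwo.two_eq_zero (R := F)) * (f (x + a + b) + f (x + b))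
  neg_mem' := by simp [CharTwo.neg_eq]

theorem mem_row : b ∈ row f a ↔ (a, b) ∈ Af f := Iff.rfl

theorem eq_univ_of_map_add (hf : ∀ x y, f (x + y) = f x + f y) : Af f = Set.univ :=
  Set.eq_univ_of_forall fun p x => by
    simp only [hf]
    linear_combination (CharTwo.two_eq_zero (R := F)) * (2 * f x + f p.1 + f p.2)

theorem mk_div_mem_of_mul_mem (hbasic : ∀ a, (a, ξ / a) ∈ Af f) (hξ : ξ ≠ 0)
    (hα : α ≠ 0) (hα₁ : 1 + α ≠ 0) (ha : a ≠ 0) (h : (a * α, ξ / (a * α * (1 + α))) ∈ Af f) :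
    (a, ξ / (a * (1 + α))) ∈ Af f := by
  have two : (2 : F) = 0 := CharTwo.two_eq_zero
  have h₁ : (a * α, ξ / (a * (1 + α))) ∈ Af f := by
    have e : ξ / (a * α * (1 + α)) + ξ / (a * α) = ξ / (a * (1 + α)) := by
      field_simp
      linear_combination two
    exact e ▸ (row f _).add_mem h (hbasic _)
  have h₂ : (ξ / (a * (1 + α)), a) ∈ Af f := by
    have e : a * α + ξ / (ξ / (a * (1 + α))) = a := by
      field_simp
      linear_combination α * two
    have h := (row f _).add_mem (swap_mem h₁) (hbasic (ξ / (a * (1 + α))))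
    rwa [e] at h
  exact swap_mem h₂

theorem mk_div_mem_of_mul_pow_mem (hbasic : ∀ a, (a, ξ / a) ∈ Af f) (hξ : ξ ≠ 0)
    (hα : α ≠ 0) (hα₁ : 1 + α ≠ 0) (k : ℕ) :
    ∀ a ≠ 0, (a * α ^ k, ξ / (a * α ^ k * (1 + α))) ∈ Af f → (a, ξ / (a * (1 + α))) ∈ Af f := by
  induction k with
  | zero => simp
  | succ k ih =>
    intro a ha h
    refine mk_div_mem_of_mul_mem hbasic hξ hα hα₁ ha (ih _ (mul_ne_zero ha hα) ?_)
    rwa [mul_assoc a α, ← pow_succ']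

theorem mk_div_mem_of_eq_sq_mul (hbasic : ∀ a, (a, ξ / a) ∈ Af f) (hξ : ξ ≠ 0)
    (hα : α ≠ 0) (hα₁ : 1 + α ≠ 0) (ha : a ≠ 0) {k : ℕ} (hk : ξ = (a * α ^ k) ^ 2 * (1 + α)) :
    (a, ξ / (a * (1 + α))) ∈ Af f := by
  refine mk_div_mem_of_mul_pow_mem hbasic hξ hα hα₁ k a ha ?_
  convert mk_self_mem (f := f) (a * α ^ k)
  rw [div_eq_iff (by simp [ha, hα, hα₁]), hk]
  ring

theorem map_add_of_row_eq_top (hf₀ : f 0 = 0) (h : row f a = ⊤) (b : F) :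
    f (b + a) = f b + f a := by
  have := (mem_row.1 (h ▸ AddSubgroup.mem_top b)) 0
  simp only [zero_add, hf₀, add_zero] at this
  rw [add_comm b a]
  linear_combination this - (CharTwo.two_eq_zero (R := F)) * (f a + f b)

variable [Finite F]

theorem div_mul_one_add_mem_row (hbasic : ∀ a, (a, ξ / a) ∈ Af f) (hξ : ξ ≠ 0)
    (hα : IsPrimitiveRoot α (Nat.card F - 1)) (ha : a ≠ 0) : ξ / (a * (1 + α)) ∈ row f a := by
  have := Fintype.ofFinite F
  have hq : NeZero (Nat.card F - 1) := ⟨by have := Finite.one_lt_card (α := F); omega⟩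
  rcases eq_or_ne (1 + α) 0 with hα₁ | hα₁
  · simp [hα₁, zero_mem]
  obtain ⟨c, hc⟩ := isSquare_of_charTwo' (ξ / (1 + α))
  have hc₀ : c ≠ 0 := by rintro rfl; simp [hξ, hα₁] at hc
  obtain ⟨k, -, hk⟩ := hα.eq_pow_of_pow_eq_one (ξ := c / a) <| by
    rw [Nat.card_eq_fintype_card]
    exact FiniteField.pow_card_sub_one_eq_one _ (div_ne_zero hc₀ ha)
  refine mk_div_mem_of_eq_sq_mul hbasic hξ (hα.ne_zero hq.out) hα₁ ha (k := k) ?_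
  rw [hk, mul_div_cancel₀ _ ha, sq, ← hc, div_mul_cancel₀ _ hα₁]

theorem row_eq_top [Module (ZMod 2) F] (hbasic : ∀ a, (a, ξ / a) ∈ Af f) (hξ : ξ ≠ 0)
    (hspan : Submodule.span (ZMod 2)
      ({x | ∃ α : F, orderOf α = Nat.card F - 1 ∧ x = 1 / (1 + α)} ∪ {1}) = ⊤)
    (ha : a ≠ 0) : row f a = ⊤ := by
  have hle : Submodule.span (ZMod 2)
      ({x | ∃ α : F, orderOf α = Nat.card F - 1 ∧ x = 1 / (1 + α)} ∪ {1}) ≤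
      ((row f a).comap (AddMonoidHom.mulLeft (ξ / a))).toZModSubmodule 2 := by
    refine Submodule.span_le.2 ?_
    rintro _ (⟨α, hα, rfl⟩ | rfl)
    · show ξ / a * (1 / (1 + α)) ∈ row f a
      rw [div_mul_div_comm, mul_one]
      exact div_mul_one_add_mem_row hbasic hξ (hα ▸ .orderOf α) ha
    · show ξ / a * 1 ∈ row f a
      rw [mul_one]
      exact hbasic a
  refine eq_top_iff.2 fun b _ => ?_
  have hb := hle (hspan ▸ Submodule.mem_top : a / ξ * b ∈ _)
  simpa [← mul_assoc, div_mul_div_cancel₀', hξ, ha] using hb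

end Af

/-- let `f(0) = 0`, `ξ ≠ 0`, and suppose the set
`P_n = {1/(1+α) : α primitive} ∪ {1}` spans F_{2ⁿ} over F₂ (primitive meaning
of multiplicative order 2ⁿ − 1). Then `{(a, ξ/a) : a ∈ F_{2ⁿ}} ⊆ A_f`
(with `ξ/0 = 0`) iff `f` is additive. -/
theorem stmt16 (n : ℕ) (hn : 0 < n) (f : GaloisField 2 n → GaloisField 2 n)
    (hf0 : f 0 = 0) (ξ : GaloisField 2 n) (hξ : ξ ≠ 0)
    (Pn : Set (GaloisField 2 n))
    (hPn : Pn = {x | ∃ α : GaloisField 2 n, orderOf α = 2 ^ n - 1 ∧ x = 1 / (1 + α)}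
      ∪ {1})
    (hspan : Submodule.span (ZMod 2) Pn = ⊤) :
    (∀ a : GaloisField 2 n, (a, ξ / a) ∈ Af f) ↔
    (∀ x y : GaloisField 2 n, f (x + y) = f x + f y) := by
  refine ⟨fun hbasic x y => ?_, fun hf a => Af.eq_univ_of_map_add hf ▸ Set.mem_univ _⟩
  rcases eq_or_ne y 0 with rfl | hy
  · simp [hf0]
  rw [← GaloisField.card 2 n hn.ne'] at hPn
  subst hPn
  exact Af.map_add_of_row_eq_top hf0 (Af.row_eq_top hbasic hξ hspan hy) x
end

section
/- Let g : F_2^n → F_2 be an arbitrary Boolean function, let Π : F_2^n → F_2^n, and define f : F_2^n × F_2^n → F_2 by f(x,y) = ⟨x, Π(y)⟩ + g(y), where ⟨x,y⟩ = Σ_{i=0}^{n−1} x_i y_i. Then Π is a permutation of F_2^n if and only if for every subset Λ ⊆ {0,…,n−1} and every (a,b) ∈ F_2^n × F_2^n with (a,b) ≠ (0,0), the Boolean function (x,y) ↦ f(x+a, y+b) + f(x,y) + Σ_{i∈Λ} y_i b_i on F_2^n × F_2^n is balanced, i.e. takes each of the two values of F_2 exactly 2^{2n−1} times. (That is, f is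 shifted-bent with respect to any subset of the y-coordinate indices if and only if Π is a permutation.) -/
/-!
Since `f (x + a, y + b) + f (x, y) = ⟨x, Π (y + b) + Π y⟩ + (terms in y only)`, every derivative
of `f`, restricted to a fixed `y`, is an affine function of `x`. If `Π` is injective and `b ≠ 0`,
its linear part is nonzero, so every such slice is balanced; if `b = 0` the derivative is
`y ↦ ⟨a, Π y⟩`, which is balanced when `Π` is a bijection. Conversely, the directions `(a, 0)` show
that every nonzero linear functional of `Π y` is balanced, and counting the pairs `(a, y)` with
`⟨a, Π y + z⟩ = 0` in two ways shows that every `z` has exactly one preimage under `Π`.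
-/

open Function Finset

def IsBalanced {α : Type*} (F : α → ZMod 2) : Prop :=
  ∀ c, 2 * Nat.card {x // F x = c} = Nat.card α

theorem Nat.card_subtype_prod_eq_sum {α β : Type*} [Fintype β] [Finite α] (P : α × β → Prop) :
    Nat.card {p : α × β // P p} = ∑ b, Nat.card {a // P (a, b)} := by
  rw [← Nat.card_sigma]
  exact Nat.card_congr <| ((Equiv.prodComm α β).subtypeEquiv fun _ => Iff.rfl).trans
    (Equiv.subtypeProdEquivSigmaSubtype fun b a => P (a, b))

theorem Nat.sum_card_subtype_comm {α β : Type*} [Fintype α] [Fintype β] (r : α → β → Prop) :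
    ∑ a, Nat.card {b // r a b} = ∑ b, Nat.card {a // r a b} := by
  rw [← Nat.card_subtype_prod_eq_sum fun p : α × β => r p.1 p.2,
    ← Nat.card_subtype_prod_eq_sum fun p : β × α => r p.2 p.1]
  exact Nat.card_congr ((Equiv.prodComm β α).subtypeEquiv fun _ => Iff.rfl)

namespace IsBalanced

variable {α β : Type*}

theorem of_add_one [Finite α] {F : α → ZMod 2} (e : α ≃ α) (he : ∀ x, F (e x) = F x + 1) :
    IsBalanced F := fun c => by
  have hswap : Nat.card {x // F x = c} = Nat.card {x // ¬F x = c} :=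
    Nat.card_congr <| e.subtypeEquiv fun x => by
      rw [he]
      exact (by decide : ∀ u v : ZMod 2, u = v ↔ ¬u + 1 = v) _ _
  rw [two_mul]
  nth_rewrite 2 [hswap]
  rw [← Nat.card_sum, Nat.card_congr (Equiv.sumCompl _)]

theorem add_const {F : α → ZMod 2} (hF : IsBalanced F) (d : ZMod 2) :
    IsBalanced fun x => F x + d := fun c => by
  simp only [← eq_sub_iff_add_eq]
  exact hF (c - d)

theorem comp_equiv {F : α → ZMod 2} (hF : IsBalanced F) (e : β ≃ α) : IsBalanced (F ∘ e) :=
  fun c => by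
    rw [Nat.card_congr e, ← hF c]
    exact congrArg _ (Nat.card_congr (e.subtypeEquiv fun _ => Iff.rfl))

theorem comp_snd_iff [Finite α] [Nonempty α] {G : β → ZMod 2} :
    IsBalanced (fun p : α × β => G p.2) ↔ IsBalanced G := by
  have hfiber (c : ZMod 2) :
      Nat.card {p : α × β // G p.2 = c} = Nat.card α * Nat.card {y // G y = c} := by
    rw [← Nat.card_prod]
    exact Nat.card_congr
      { toFun := fun p => (p.1.1, ⟨p.1.2, p.2⟩)
        invFun := fun q => ⟨(q.1, q.2.1), q.2.2⟩ }
  refine forall_congr' fun c => ?_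
  rw [hfiber, Nat.card_prod, mul_left_comm]
  exact Nat.mul_left_cancel_iff Nat.card_pos

theorem of_forall_slice [Finite α] [Fintype β] {F : α × β → ZMod 2}
    (h : ∀ y, IsBalanced fun x => F (x, y)) : IsBalanced F := fun c => by
  rw [Nat.card_subtype_prod_eq_sum, mul_sum, Fintype.sum_congr _ _ fun y => h y c, sum_const,
    card_univ, smul_eq_mul, Nat.card_prod, Nat.card_eq_fintype_card (α := β), mul_comm]

end IsBalanced

theorem isBalanced_iff_card_eq {α : Type*} {k : ℕ} (hα : Nat.card α = 2 ^ (k + 1))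
    {F : α → ZMod 2} : IsBalanced F ↔ ∀ c, Nat.card {x // F x = c} = 2 ^ k := by
  refine forall_congr' fun c => ?_
  rw [hα, pow_succ', Nat.mul_left_cancel_iff two_pos]

theorem pi_zmod_two_add_eq_zero_iff {ι : Type*} {v w : ι → ZMod 2} : v + w = 0 ↔ v = w := by
  simp only [funext_iff, Pi.add_apply, Pi.zero_apply, CharTwo.add_eq_zero]

section DotProduct

variable {ι : Type*} [Fintype ι]

theorem isBalanced_dotProduct {w : ι → ZMod 2} (hw : w ≠ 0) : IsBalanced fun x => x ⬝ᵥ w := by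
  classical
  obtain ⟨i, hi⟩ := Function.ne_iff.mp hw
  have hwi : w i = 1 := (by decide : ∀ u : ZMod 2, u ≠ 0 → u = 1) _ hi
  refine IsBalanced.of_add_one (Equiv.addLeft (Pi.single i 1)) fun x => ?_
  rw [Equiv.coe_addLeft, add_dotProduct, single_dotProduct, hwi, one_mul, add_comm]

theorem card_fiber_mul_card_eq_of_isBalanced_dotProduct {β : Type*} [Fintype β]
    {π : β → ι → ZMod 2} (h : ∀ a ≠ 0, IsBalanced fun y => a ⬝ᵥ π y) (z : ι → ZMod 2) :
    Nat.card {y // π y = z} * Nat.card (ι → ZMod 2) = Nat.card β := by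
  classical
  have hcount_a (a : ι → ZMod 2) :
      2 * Nat.card {y // a ⬝ᵥ (π y + z) = 0}
        = Nat.card β + if a = 0 then Nat.card β else 0 := by
    by_cases ha : a = 0
    · subst ha
      simp [two_mul]
    · simp only [if_neg ha, add_zero, dotProduct_add, CharTwo.add_eq_zero]
      exact h a ha (a ⬝ᵥ z)
  have hcount_y (y : β) :
      2 * Nat.card {a // a ⬝ᵥ (π y + z) = 0}
        = Nat.card (ι → ZMod 2) + if π y = z then Nat.card (ι → ZMod 2) else 0 := by
    by_cases hy : π y = z
    · simp [hy, dotProduct_add, CharTwo.add_self_eq_zero, two_mul]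
    · rw [if_neg hy, add_zero]
      exact isBalanced_dotProduct (mt pi_zmod_two_add_eq_zero_iff.mp hy) 0
  have hdouble := congrArg (2 * ·) (Nat.sum_card_subtype_comm fun a y => a ⬝ᵥ (π y + z) = 0)
  simp only [mul_sum, hcount_a, hcount_y, sum_add_distrib, sum_const, card_univ, smul_eq_mul,
    sum_ite_eq', mem_univ, if_true, ← sum_filter] at hdouble
  rw [← Nat.card_eq_fintype_card, ← Nat.card_eq_fintype_card, ← Fintype.card_subtype,
    ← Nat.card_eq_fintype_card] at hdouble
  -- `hdouble : M * B + B = B * M + #π⁻¹{z} * M`, with `M = #(ι → ZMod 2)` and `B = #β`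
  linarith

theorem surjective_of_forall_isBalanced_dotProduct {π : (ι → ZMod 2) → ι → ZMod 2}
    (h : ∀ a ≠ 0, IsBalanced fun y => a ⬝ᵥ π y) : Surjective π := fun z => by
  classical
  by_contra hz
  have : IsEmpty {y // π y = z} := ⟨fun y => hz ⟨y.1, y.2⟩⟩
  have hcard := card_fiber_mul_card_eq_of_isBalanced_dotProduct h z
  rw [Nat.card_of_isEmpty, zero_mul] at hcard
  exact Nat.card_pos.ne hcard

variable {g : (ι → ZMod 2) → ZMod 2} {π : (ι → ZMod 2) → ι → ZMod 2}
  {f : (ι → ZMod 2) × (ι → ZMod 2) → ZMod 2}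

theorem add_shift_eq (hf : ∀ x y, f (x, y) = x ⬝ᵥ π y + g y) (x y a b : ι → ZMod 2) :
    f (x + a, y + b) + f (x, y)
      = x ⬝ᵥ (π (y + b) + π y) + (a ⬝ᵥ π (y + b) + g (y + b) + g y) := by
  rw [hf, hf, add_dotProduct, dotProduct_add]
  ring

theorem add_shift_fst_eq (hf : ∀ x y, f (x, y) = x ⬝ᵥ π y + g y) (a : ι → ZMod 2) :
    (fun p : (ι → ZMod 2) × (ι → ZMod 2) => f (p.1 + a, p.2) + f p) = fun p => a ⬝ᵥ π p.2 := by
  ext ⟨x, y⟩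
  rw [hf, hf, add_dotProduct]
  linear_combination (x ⬝ᵥ π y + g y) * (CharTwo.two_eq_zero : (2 : ZMod 2) = 0)

theorem isBalanced_shift_of_bijective (hf : ∀ x y, f (x, y) = x ⬝ᵥ π y + g y)
    (hπ : Bijective π) (Λ : Finset ι) {a b : ι → ZMod 2} (hab : (a, b) ≠ (0, 0)) :
    IsBalanced fun p : (ι → ZMod 2) × (ι → ZMod 2) =>
      f (p.1 + a, p.2 + b) + f p + ∑ i ∈ Λ, p.2 i * b i := by
  classical
  by_cases hb : b = 0
  · subst hb
    have ha : a ≠ 0 := fun ha => hab (by rw [ha])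
    simp only [add_zero, Pi.zero_apply, mul_zero, sum_const_zero, add_shift_fst_eq hf,
      dotProduct_comm a]
    refine (IsBalanced.comp_snd_iff (G := fun y => π y ⬝ᵥ a)).mpr ?_
    exact (isBalanced_dotProduct ha).comp_equiv (Equiv.ofBijective π hπ)
  · refine IsBalanced.of_forall_slice fun y => ?_
    simp only [add_shift_eq hf, add_assoc]
    refine (isBalanced_dotProduct fun h0 => hb ?_).add_const _
    simpa using hπ.1 (pi_zmod_two_add_eq_zero_iff.mp h0)

theorem isBalanced_dotProduct_comp_of_isBalanced_shift (hf : ∀ x y, f (x, y) = x ⬝ᵥ π y + g y)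
    (a : ι → ZMod 2)
    (h : IsBalanced fun p : (ι → ZMod 2) × (ι → ZMod 2) => f (p.1 + a, p.2) + f p) :
    IsBalanced fun y => a ⬝ᵥ π y := by
  rw [add_shift_fst_eq hf] at h
  exact IsBalanced.comp_snd_iff.mp h

end DotProduct

theorem stmt17_general (n : ℕ)
    (g : (Fin n → ZMod 2) → ZMod 2)
    (π : (Fin n → ZMod 2) → (Fin n → ZMod 2))
    (f : (Fin n → ZMod 2) × (Fin n → ZMod 2) → ZMod 2)
    (hf : ∀ x y : Fin n → ZMod 2, f (x, y) = (∑ i, x i * π y i) + g y) :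
    Bijective π ↔
    ∀ (Λ : Finset (Fin n)) (a b : Fin n → ZMod 2), (a, b) ≠ (0, 0) →
      ∀ c : ZMod 2,
        Nat.card {p : (Fin n → ZMod 2) × (Fin n → ZMod 2) //
          f (p.1 + a, p.2 + b) + f p + ∑ i ∈ Λ, p.2 i * b i = c}
          = 2 ^ (2 * n - 1) := by
  have hcard {v : (Fin n → ZMod 2) × (Fin n → ZMod 2)} (hv : v ≠ 0) :
      Nat.card ((Fin n → ZMod 2) × (Fin n → ZMod 2)) = 2 ^ (2 * n - 1 + 1) := by
    have hn : n ≠ 0 := by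
      rintro rfl
      exact hv (Subsingleton.elim _ _)
    rw [Nat.card_prod, Nat.card_fun, Nat.card_zmod, Nat.card_fin, ← pow_add]
    congr 1
    omega
  constructor
  · intro hπ Λ a b hab
    exact (isBalanced_iff_card_eq (hcard hab)).mp (isBalanced_shift_of_bijective hf hπ Λ hab)
  · intro H
    refine Finite.surjective_iff_bijective.mp
      (surjective_of_forall_isBalanced_dotProduct fun a ha => ?_)
    have hab : (a, (0 : Fin n → ZMod 2)) ≠ (0, 0) := by simpa using ha
    refine isBalanced_dotProduct_comp_of_isBalanced_shift hf a ?_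
    simpa using (isBalanced_iff_card_eq (hcard hab)).mpr (H ∅ a 0 hab)

/-- for `f(x,y) = ⟨x, Π(y)⟩ + g(y)` on F₂ⁿ × F₂ⁿ, the map `Π` is
a permutation of F₂ⁿ iff for every `Λ ⊆ {0,…,n−1}` and every `(a,b) ≠ (0,0)`
the function `(x,y) ↦ f(x+a, y+b) + f(x,y) + Σ_{i∈Λ} yᵢbᵢ` is balanced,
taking each of the two values of F₂ exactly `2^{2n−1}` times; i.e. `f` is
shifted-bent with respect to any subset of the `y`-coordinate indices. -/
theorem stmt17 (n : ℕ) (hn : 0 < n)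
    (g : (Fin n → ZMod 2) → ZMod 2)
    (π : (Fin n → ZMod 2) → (Fin n → ZMod 2))
    (f : (Fin n → ZMod 2) × (Fin n → ZMod 2) → ZMod 2)
    (hf : ∀ x y : Fin n → ZMod 2, f (x, y) = (∑ i, x i * π y i) + g y) :
    Bijective π ↔
    ∀ (Λ : Finset (Fin n)) (a b : Fin n → ZMod 2), (a, b) ≠ (0, 0) →
      ∀ c : ZMod 2,
        Nat.card {p : (Fin n → ZMod 2) × (Fin n → ZMod 2) //
          f (p.1 + a, p.2 + b) + f p + ∑ i ∈ Λ, p.2 i * b i = c}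
          = 2 ^ (2 * n - 1) :=
  stmt17_general n g π f hf
end

section
/- Let m, n be positive integers, let Π_1 : F_2^m → F_2 be shifted-bent with respect to Λ_1 ⊆ {0,…,m−1}, and let Π_2 : F_2^n → F_2 be shifted-bent with respect to Λ_2 ⊆ {0,…,n−1}. Then f : F_2^m × F_2^n → F_2 defined by f(x,y) := Π_1(x) + Π_2(y) is shifted-bent with respect to the union of Λ_1 (among the x-coordinates) and Λ_2 (among the y-coordinates); i.e. for every (a,b) ∈ F_2^m × F_2^n with (a,b) ≠ (0,0), the Boolean function (x,y) ↦ f(x+a, y+b) + f(x,y) + Σ_{i∈Λ_1} x_i a_i + Σ_{j∈Λ_2} y_j b_j is balanced on F_2^m × F_2^n, taking each of the two values of F_2 exactly 2^{m+n−1} times. -/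
/-!
The shifted derivative of `P₁(x) + P₂(y)` in direction `(a, b)` splits as the sum of the
shifted derivatives of `P₁` in direction `a` and of `P₂` in direction `b`. One of `a`, `b` is
nonzero, say `b`; then for each fixed `x` the value `c` is attained at exactly `2^(n-1)` points
`y`, so at `2^m · 2^(n-1)` points `(x, y)` in all.
-/

open Function

def ShiftedBent {m : ℕ} (F : (Fin m → ZMod 2) → ZMod 2) (Λ : Finset (Fin m)) :
    Prop :=
  ∀ a : Fin m → ZMod 2, a ≠ 0 → ∀ c : ZMod 2,
    Nat.card {x : Fin m → ZMod 2 //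
      F (x + a) + F x + ∑ i ∈ Λ, x i * a i = c} = 2 ^ (m - 1)

section FiberCount

variable {α β G : Type*} [Finite α] [Finite β]

theorem Nat.card_add_eq_of_card_fiber_right [AddGroup G] (g : α → G) (h : β → G) {k : ℕ}
    (hh : ∀ d, Nat.card {y // h y = d} = k) (c : G) :
    Nat.card {p : α × β // g p.1 + h p.2 = c} = Nat.card α * k := by
  have : Fintype α := Fintype.ofFinite α
  let e : {p : α × β // g p.1 + h p.2 = c} ≃ Σ x : α, {y // h y = -g x + c} :=
    { toFun := fun p => ⟨p.1.1, p.1.2, eq_neg_add_of_add_eq p.2⟩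
      invFun := fun s => ⟨(s.1, s.2.1), add_eq_of_eq_neg_add s.2.2⟩
      left_inv := fun _ => rfl
      right_inv := fun _ => rfl }
  simp [Nat.card_congr e, Nat.card_sigma, hh, mul_comm]

theorem Nat.card_add_eq_of_card_fiber_left [AddCommGroup G] (g : α → G) (h : β → G) {k : ℕ}
    (hg : ∀ d, Nat.card {x // g x = d} = k) (c : G) :
    Nat.card {p : α × β // g p.1 + h p.2 = c} = k * Nat.card β := by
  let e : {p : α × β // g p.1 + h p.2 = c} ≃ {q : β × α // h q.1 + g q.2 = c} :=
    (Equiv.prodComm α β).subtypeEquiv fun p => by rw [add_comm]; rfl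
  rw [Nat.card_congr e, Nat.card_add_eq_of_card_fiber_right h g hg, mul_comm]

end FiberCount

theorem pos_of_fin_fun_ne_zero {m : ℕ} {R : Type*} [Zero R] {a : Fin m → R} (ha : a ≠ 0) :
    0 < m := by
  refine Nat.pos_of_ne_zero fun hm => ha ?_
  subst hm
  exact Subsingleton.elim _ _

def shiftedDeriv {m : ℕ} (F : (Fin m → ZMod 2) → ZMod 2) (Λ : Finset (Fin m))
    (a x : Fin m → ZMod 2) : ZMod 2 :=
  F (x + a) + F x + ∑ i ∈ Λ, x i * a i

theorem ShiftedBent.card_shiftedDeriv {m : ℕ} {F : (Fin m → ZMod 2) → ZMod 2}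
    {Λ : Finset (Fin m)} (hF : ShiftedBent F Λ) {a : Fin m → ZMod 2} (ha : a ≠ 0)
    (c : ZMod 2) :
    Nat.card {x // shiftedDeriv F Λ a x = c} = 2 ^ (m - 1) :=
  hF a ha c

theorem ShiftedBent.card_shiftedDeriv_add {m n : ℕ}
    {P₁ : (Fin m → ZMod 2) → ZMod 2} {P₂ : (Fin n → ZMod 2) → ZMod 2}
    {Λ₁ : Finset (Fin m)} {Λ₂ : Finset (Fin n)}
    (h₁ : ShiftedBent P₁ Λ₁) (h₂ : ShiftedBent P₂ Λ₂)
    {a : Fin m → ZMod 2} {b : Fin n → ZMod 2} (hab : (a, b) ≠ 0) (c : ZMod 2) :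
    Nat.card {p : (Fin m → ZMod 2) × (Fin n → ZMod 2) //
      shiftedDeriv P₁ Λ₁ a p.1 + shiftedDeriv P₂ Λ₂ b p.2 = c} = 2 ^ (m + n - 1) := by
  by_cases hb : b = 0
  · have ha : a ≠ 0 := by rintro rfl; exact hab (Prod.ext rfl hb)
    have hm := pos_of_fin_fun_ne_zero ha
    rw [Nat.card_add_eq_of_card_fiber_left _ _ (h₁.card_shiftedDeriv ha) c,
      Nat.card_fun, Nat.card_zmod, Nat.card_fin, ← pow_add]
    congr 1
    omega
  · have hn := pos_of_fin_fun_ne_zero hb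
    rw [Nat.card_add_eq_of_card_fiber_right _ _ (h₂.card_shiftedDeriv hb) c,
      Nat.card_fun, Nat.card_zmod, Nat.card_fin, ← pow_add]
    congr 1
    omega

theorem stmt19_general (m n : ℕ)
    (P₁ : (Fin m → ZMod 2) → ZMod 2) (P₂ : (Fin n → ZMod 2) → ZMod 2)
    (Λ₁ : Finset (Fin m)) (Λ₂ : Finset (Fin n))
    (h₁ : ShiftedBent P₁ Λ₁) (h₂ : ShiftedBent P₂ Λ₂)
    (f : (Fin m → ZMod 2) × (Fin n → ZMod 2) → ZMod 2)
    (hf : ∀ x y, f (x, y) = P₁ x + P₂ y) :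
    ∀ (a : Fin m → ZMod 2) (b : Fin n → ZMod 2), (a, b) ≠ (0, 0) →
      ∀ c : ZMod 2,
        Nat.card {p : (Fin m → ZMod 2) × (Fin n → ZMod 2) //
          f (p.1 + a, p.2 + b) + f p
            + ∑ i ∈ Λ₁, p.1 i * a i + ∑ j ∈ Λ₂, p.2 j * b j = c}
          = 2 ^ (m + n - 1) := by
  intro a b hab c
  have hderiv : ∀ p : (Fin m → ZMod 2) × (Fin n → ZMod 2),
      f (p.1 + a, p.2 + b) + f p + ∑ i ∈ Λ₁, p.1 i * a i + ∑ j ∈ Λ₂, p.2 j * b j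
        = shiftedDeriv P₁ Λ₁ a p.1 + shiftedDeriv P₂ Λ₂ b p.2 := fun p => by
    rw [hf, ← Prod.mk.eta (p := p), hf]
    simp only [shiftedDeriv]
    ring
  simp only [hderiv]
  exact h₁.card_shiftedDeriv_add h₂ hab c

/-- if `P₁` is shifted-bent on F₂^m w.r.t. `Λ₁` and `P₂` is
shifted-bent on F₂ⁿ w.r.t. `Λ₂`, then `f(x,y) = P₁(x) + P₂(y)` is shifted-bent
w.r.t. the union of `Λ₁` (among the x-coordinates) and `Λ₂` (among the
y-coordinates): for every `(a,b) ≠ (0,0)` the function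
`(x,y) ↦ f(x+a,y+b) + f(x,y) + Σ_{i∈Λ₁} xᵢaᵢ + Σ_{j∈Λ₂} yⱼbⱼ` takes each of
the two values of F₂ exactly `2^{m+n−1}` times. -/
theorem stmt19 (m n : ℕ) (hm : 0 < m) (hn : 0 < n)
    (P₁ : (Fin m → ZMod 2) → ZMod 2) (P₂ : (Fin n → ZMod 2) → ZMod 2)
    (Λ₁ : Finset (Fin m)) (Λ₂ : Finset (Fin n))
    (h₁ : ShiftedBent P₁ Λ₁) (h₂ : ShiftedBent P₂ Λ₂)
    (f : (Fin m → ZMod 2) × (Fin n → ZMod 2) → ZMod 2)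
    (hf : ∀ x y, f (x, y) = P₁ x + P₂ y) :
    ∀ (a : Fin m → ZMod 2) (b : Fin n → ZMod 2), (a, b) ≠ (0, 0) →
      ∀ c : ZMod 2,
        Nat.card {p : (Fin m → ZMod 2) × (Fin n → ZMod 2) //
          f (p.1 + a, p.2 + b) + f p
            + ∑ i ∈ Λ₁, p.1 i * a i + ∑ j ∈ Λ₂, p.2 j * b j = c}
          = 2 ^ (m + n - 1) :=
  stmt19_general m n P₁ P₂ Λ₁ Λ₂ h₁ h₂ f hf
end
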